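/- arXiv:1712.08748 — 6 statements merged into one kernel-verified Lean document; each statement's English description precedes it below -/
import Mathlib

section
/- Under the unit-root assumption, for every j ∈ ℤ one has N_{j−1}A₁ − N_j(I − A₁) = δ_{j,0}·I and A₁N_{j−1} − (I − A₁)N_j = δ_{j,0}·I, where δ_{j,0} = 1 if j = 0 and δ_{j,0} = 0 otherwise. -/
/-!
On the circle `|z - 1| = r` the resolvent `R z = (I - z A₁)⁻¹` satisfies
`R z (I - A₁) - (z - 1) R z A₁ = R z (I - z A₁) = I`, and symmetrically with the factors on the
left. Take the `j`-th Laurent coefficient `(2πi)⁻¹ ∮ (z - 1)^(-j-1) f z dz` of both sides: it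
commutes with multiplication by a constant operator, multiplication by `z - 1` shifts it from
`j` to `j - 1`, and the coefficient of the constant `I` is `δ_{j,0} I` because
`∮ (z - 1)^(-j-1) dz = 2πi δ_{j,0}`. Since `N_j` is minus this coefficient, the two identities follow.
-/

/-- Laurent coefficients at `z = 1` of the inverse pencil `(I - z A₁)⁻¹`:
`N j = -(1/(2πi)) ∮_{|z-1|=r} (I - z A₁)⁻¹ (z-1)^{-j-1} dz`. -/
noncomputable def laurentN {B : Type*} [NormedAddCommGroup B] [NormedSpace ℂ B]
    (A₁ : B →L[ℂ] B) (r : ℝ) (j : ℤ) : B →L[ℂ] B :=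
  (-(2 * (Real.pi : ℂ) * Complex.I)⁻¹) •
    circleIntegral (fun z => (z - 1) ^ (-j - 1) • Ring.inverse (1 - z • A₁)) 1 r

open Metric Complex
open scoped Real

noncomputable def circleLaurentCoeff {E : Type*} [NormedAddCommGroup E] [NormedSpace ℂ E]
    (f : ℂ → E) (c : ℂ) (r : ℝ) (n : ℤ) : E :=
  (2 * π * I)⁻¹ • ∮ z in C(c, r), (z - c) ^ (-n - 1) • f z

lemma sub_smul_sub_sub_smul {R M : Type*} [Ring R] [AddCommGroup M] [Module R M] (x a : M)
    (c z : R) : (x - c • a) - (z - c) • a = x - z • a := by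
  rw [sub_smul]
  abel

section LaurentCoeff

variable {E F : Type*} [NormedAddCommGroup E] [NormedSpace ℂ E] [NormedAddCommGroup F]
  [NormedSpace ℂ F] {f g : ℂ → E} {c : ℂ} {r : ℝ}

lemma circleIntegrable_sub_zpow_smul (hr : 0 < r) (hf : ContinuousOn f (sphere c r)) (m : ℤ) :
    CircleIntegrable (fun z => (z - c) ^ m • f z) c r := by
  refine ContinuousOn.circleIntegrable hr.le (ContinuousOn.smul ?_ hf)
  exact (continuousOn_id.sub continuousOn_const).zpow₀ m
    fun z hz => Or.inl (sub_ne_zero.2 (ne_of_mem_sphere hz hr.ne'))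

lemma circleLaurentCoeff_congr (hr : 0 ≤ r) (h : Set.EqOn f g (sphere c r)) (n : ℤ) :
    circleLaurentCoeff f c r n = circleLaurentCoeff g c r n := by
  unfold circleLaurentCoeff
  congr 1
  exact circleIntegral.integral_congr hr fun z hz => by simp only [h hz]

lemma circleLaurentCoeff_sub (hr : 0 < r) (hf : ContinuousOn f (sphere c r))
    (hg : ContinuousOn g (sphere c r)) (n : ℤ) :
    circleLaurentCoeff (fun z => f z - g z) c r n
      = circleLaurentCoeff f c r n - circleLaurentCoeff g c r n := by
  simp only [circleLaurentCoeff, smul_sub]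
  rw [circleIntegral.integral_sub (circleIntegrable_sub_zpow_smul hr hf _)
    (circleIntegrable_sub_zpow_smul hr hg _), smul_sub]

lemma circleLaurentCoeff_sub_smul (hr : 0 < r) (n : ℤ) :
    circleLaurentCoeff (fun z => (z - c) • f z) c r n = circleLaurentCoeff f c r (n - 1) := by
  unfold circleLaurentCoeff
  congr 1
  refine circleIntegral.integral_congr hr.le fun z hz => ?_
  have hz : z - c ≠ 0 := sub_ne_zero.2 (ne_of_mem_sphere hz hr.ne')
  rw [smul_smul, ← zpow_add_one₀ hz]
  ring_nf

lemma circleLaurentCoeff_const [CompleteSpace E] (hr : r ≠ 0) (e : E) (n : ℤ) :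
    circleLaurentCoeff (fun _ => e) c r n = if n = 0 then e else 0 := by
  rw [circleLaurentCoeff, circleIntegral.integral_smul_const, smul_smul]
  split_ifs with hn
  · subst hn
    have hinv : (fun z : ℂ => (z - c) ^ (-(0 : ℤ) - 1)) = fun z => (z - c)⁻¹ := by simp
    rw [hinv, circleIntegral.integral_sub_center_inv c hr, inv_mul_cancel₀ two_pi_I_ne_zero,
      one_smul]
  · rw [circleIntegral.integral_sub_zpow_of_ne (by omega), mul_zero, zero_smul]

lemma ContinuousLinearMap.circleLaurentCoeff_comp_comm [CompleteSpace E] [CompleteSpace F]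
    (L : E →L[ℂ] F) (hr : 0 < r) (hf : ContinuousOn f (sphere c r)) (n : ℤ) :
    circleLaurentCoeff (fun z => L (f z)) c r n = L (circleLaurentCoeff f c r n) := by
  have hint := (circleIntegrable_sub_zpow_smul hr hf (-n - 1)).out
  simp only [circleLaurentCoeff, circleIntegral, ← L.map_smul,
    L.intervalIntegral_comp_comm hint]

end LaurentCoeff

section Resolvent

variable {A : Type*} [NormedRing A] [NormedAlgebra ℂ A] [CompleteSpace A] {f : ℂ → A} {c : ℂ}
  {r : ℝ}

lemma circleLaurentCoeff_mul_const (hr : 0 < r) (hf : ContinuousOn f (sphere c r)) (a : A)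
    (n : ℤ) : circleLaurentCoeff (fun z => f z * a) c r n = circleLaurentCoeff f c r n * a :=
  ((ContinuousLinearMap.mul ℂ A).flip a).circleLaurentCoeff_comp_comm hr hf n

lemma circleLaurentCoeff_const_mul (hr : 0 < r) (hf : ContinuousOn f (sphere c r)) (a : A)
    (n : ℤ) : circleLaurentCoeff (fun z => a * f z) c r n = a * circleLaurentCoeff f c r n :=
  (ContinuousLinearMap.mul ℂ A a).circleLaurentCoeff_comp_comm hr hf n

lemma continuousOn_ringInverse_one_sub_smul (a : A) {s : Set ℂ}
    (hs : ∀ z ∈ s, IsUnit (1 - z • a)) : ContinuousOn (fun z : ℂ => Ring.inverse (1 - z • a)) s :=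
  fun z hz => by
    have h := NormedRing.inverse_continuousAt (hs z hz).unit
    rw [IsUnit.unit_spec] at h
    exact h.comp_continuousWithinAt (f := fun w : ℂ => 1 - w • a) (by fun_prop)

theorem circleLaurentCoeff_ringInverse_mul_sub {a : A} (hr : 0 < r)
    (hunit : ∀ z ∈ sphere c r, IsUnit (1 - z • a)) (j : ℤ) :
    circleLaurentCoeff (fun z => Ring.inverse (1 - z • a)) c r j * (1 - c • a)
      - circleLaurentCoeff (fun z => Ring.inverse (1 - z • a)) c r (j - 1) * a
      = if j = 0 then 1 else 0 := by
  have hR := continuousOn_ringInverse_one_sub_smul a hunit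
  have hRb : ContinuousOn (fun z => Ring.inverse (1 - z • a) * (1 - c • a)) (sphere c r) :=
    hR.mul continuousOn_const
  have hzRa : ContinuousOn (fun z => (z - c) • (Ring.inverse (1 - z • a) * a)) (sphere c r) :=
    (continuousOn_id.sub continuousOn_const).smul (hR.mul continuousOn_const)
  calc _ = circleLaurentCoeff (fun z => Ring.inverse (1 - z • a) * (1 - c • a)
              - (z - c) • (Ring.inverse (1 - z • a) * a)) c r j := by
        rw [circleLaurentCoeff_sub hr hRb hzRa, circleLaurentCoeff_sub_smul hr,
          circleLaurentCoeff_mul_const hr hR, circleLaurentCoeff_mul_const hr hR]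
    _ = circleLaurentCoeff (fun _ => 1) c r j := by
        refine circleLaurentCoeff_congr hr.le (fun z hz => ?_) j
        rw [← mul_smul_comm, ← mul_sub, sub_smul_sub_sub_smul,
          Ring.inverse_mul_cancel _ (hunit z hz)]
    _ = _ := circleLaurentCoeff_const hr.ne' 1 j

theorem one_sub_mul_circleLaurentCoeff_ringInverse_sub {a : A} (hr : 0 < r)
    (hunit : ∀ z ∈ sphere c r, IsUnit (1 - z • a)) (j : ℤ) :
    (1 - c • a) * circleLaurentCoeff (fun z => Ring.inverse (1 - z • a)) c r j
      - a * circleLaurentCoeff (fun z => Ring.inverse (1 - z • a)) c r (j - 1)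
      = if j = 0 then 1 else 0 := by
  have hR := continuousOn_ringInverse_one_sub_smul a hunit
  have hbR : ContinuousOn (fun z => (1 - c • a) * Ring.inverse (1 - z • a)) (sphere c r) :=
    continuousOn_const.mul hR
  have hzaR : ContinuousOn (fun z => (z - c) • (a * Ring.inverse (1 - z • a))) (sphere c r) :=
    (continuousOn_id.sub continuousOn_const).smul (continuousOn_const.mul hR)
  calc _ = circleLaurentCoeff (fun z => (1 - c • a) * Ring.inverse (1 - z • a)
              - (z - c) • (a * Ring.inverse (1 - z • a))) c r j := by
        rw [circleLaurentCoeff_sub hr hbR hzaR, circleLaurentCoeff_sub_smul hr,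
          circleLaurentCoeff_const_mul hr hR, circleLaurentCoeff_const_mul hr hR]
    _ = circleLaurentCoeff (fun _ => 1) c r j := by
        refine circleLaurentCoeff_congr hr.le (fun z hz => ?_) j
        rw [← smul_mul_assoc, ← sub_mul, sub_smul_sub_sub_smul,
          Ring.mul_inverse_cancel _ (hunit z hz)]
    _ = _ := circleLaurentCoeff_const hr.ne' 1 j

end Resolvent

theorem statement1_general
    {B : Type*} [NormedAddCommGroup B] [NormedSpace ℂ B] [CompleteSpace B]
    (A₁ : B →L[ℂ] B) (η : ℝ)
    (hinv : ∀ z : ℂ, ‖z‖ < 1 + η → z ≠ 1 → IsUnit (1 - z • A₁))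
    (r : ℝ) (hr0 : 0 < r) (hrη : r < η) (j : ℤ) :
    laurentN A₁ r (j - 1) * A₁ - laurentN A₁ r j * (1 - A₁)
        = (if j = 0 then 1 else 0) ∧
    A₁ * laurentN A₁ r (j - 1) - (1 - A₁) * laurentN A₁ r j
        = (if j = 0 then 1 else 0) := by
  have hunit : ∀ z ∈ sphere (1 : ℂ) r, IsUnit (1 - z • A₁) := fun z hz => by
    refine hinv z ?_ (ne_of_mem_sphere hz hr0.ne')
    have := norm_sub_norm_le z 1
    rw [← dist_eq_norm, mem_sphere.1 hz, norm_one] at this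
    linarith
  have hN (n : ℤ) : laurentN A₁ r n
      = -circleLaurentCoeff (fun z => Ring.inverse (1 - z • A₁)) 1 r n :=
    neg_smul _ _
  have hright := circleLaurentCoeff_ringInverse_mul_sub hr0 hunit j
  have hleft := one_sub_mul_circleLaurentCoeff_ringInverse_sub hr0 hunit j
  rw [one_smul] at hright hleft
  simp only [hN, neg_mul, mul_neg]
  constructor
  · rw [← hright]; abel
  · rw [← hleft]; abel

/-- under the unit-root assumption, the expansion of the identity holds:
`N_{j-1} A₁ - N_j (I - A₁) = δ_{j,0} I` and `A₁ N_{j-1} - (I - A₁) N_j = δ_{j,0} I`. -/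
theorem statement1
    {B : Type*} [NormedAddCommGroup B] [NormedSpace ℂ B] [CompleteSpace B]
    (A₁ : B →L[ℂ] B) (η : ℝ) (hη : 0 < η)
    (hinv : ∀ z : ℂ, ‖z‖ < 1 + η → z ≠ 1 → IsUnit (1 - z • A₁))
    (hnot : ¬ IsUnit (1 - A₁))
    (r : ℝ) (hr0 : 0 < r) (hrη : r < η) (j : ℤ) :
    laurentN A₁ r (j - 1) * A₁ - laurentN A₁ r j * (1 - A₁)
        = (if j = 0 then 1 else 0) ∧
    A₁ * laurentN A₁ r (j - 1) - (1 - A₁) * laurentN A₁ r j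
        = (if j = 0 then 1 else 0) :=
  statement1_general A₁ η hinv r hr0 hrη j
end

section
/- Under the unit-root assumption, for all j, k ∈ ℤ one has N_j A₁ N_k = (1 − η_j − η_k) N_{j+k+1}, where η_j = 1 if j ≥ 0 and η_j = 0 if j < 0. Consequently N_{−1}A₁ is idempotent: (N_{−1}A₁)² = N_{−1}A₁. -/
open Complex Metric Set MeasureTheory Real

section CauchyKernel

variable {c p : ℂ} {R : ℝ}

theorem continuousOn_sub_center_zpow (hR : R ≠ 0) (n : ℤ) :
    ContinuousOn (fun z => (z - c) ^ n) (sphere c R) :=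
  (continuousOn_id.sub continuousOn_const).zpow₀ n fun _ hz =>
    .inl (sub_ne_zero.2 (ne_of_mem_sphere hz hR))

theorem circleIntegral_sub_center_zpow (hR : R ≠ 0) (n : ℤ) :
    (∮ z in C(c, R), (z - c) ^ n) = if n = -1 then 2 * π * I else 0 := by
  split_ifs with hn
  · simpa [hn] using circleIntegral.integral_sub_center_inv c hR
  · exact circleIntegral.integral_sub_zpow_of_ne hn c c R

theorem circleIntegral_sub_zpow_mul_inv_sub (hR : 0 < R) (hp : p ∉ sphere c R) (hpc : p ≠ c)
    (n : ℤ) :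
    (∮ z in C(c, R), (z - c) ^ n * (z - p)⁻¹)
      = (p - c) ^ n * ((∮ z in C(c, R), (z - p)⁻¹) - if n < 0 then 2 * π * I else 0) := by
  have hzp : ∀ z ∈ sphere c R, z - p ≠ 0 := fun z hz => sub_ne_zero.2 fun h => hp (h ▸ hz)
  have hinv : ContinuousOn (fun z => (z - p)⁻¹) (sphere c R) :=
    (continuousOn_id.sub continuousOn_const).inv₀ hzp
  have hrec : ∀ m : ℤ, (∮ z in C(c, R), (z - c) ^ (m + 1) * (z - p)⁻¹)
      = (p - c) * (∮ z in C(c, R), (z - c) ^ m * (z - p)⁻¹) + if m = -1 then 2 * π * I else 0 := by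
    intro m
    have hcongr : EqOn (fun z => (z - c) ^ (m + 1) * (z - p)⁻¹)
        (fun z => (z - c) ^ m + (p - c) * ((z - c) ^ m * (z - p)⁻¹)) (sphere c R) := by
      intro z hz
      simp only [zpow_add_one₀ (sub_ne_zero.2 (ne_of_mem_sphere hz hR.ne'))]
      field_simp [hzp z hz]
      ring
    have hpow := continuousOn_sub_center_zpow (c := c) hR.ne' m
    rw [circleIntegral.integral_congr hR.le hcongr, circleIntegral.integral_add
      (hpow.circleIntegrable hR.le)
      ((continuousOn_const.fun_mul (hpow.fun_mul hinv)).circleIntegrable hR.le),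
      circleIntegral.integral_const_mul, circleIntegral_sub_center_zpow hR.ne', add_comm]
  have hpc' : p - c ≠ 0 := sub_ne_zero.2 hpc
  induction n with
  | zero => simp
  | succ i ih =>
    rw [hrec, ih, if_neg (by omega), if_neg (by omega), if_neg (by omega), zpow_add_one₀ hpc']
    ring
  | pred i ih =>
    have h := hrec (-i - 1)
    rw [sub_add_cancel, ih] at h
    apply mul_left_cancel₀ hpc'
    rw [← mul_assoc, ← zpow_one_add₀ hpc', show (1 : ℤ) + (-i - 1) = -i by ring,
      eq_sub_of_add_eq h.symm, if_pos (by omega : -(i : ℤ) - 1 < 0)]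
    rcases Nat.eq_zero_or_pos i with rfl | hi
    · simp
    · rw [if_pos (by omega), if_neg (by omega)]
      ring

theorem circleIntegral_zpow_mul_zpow_mul_inv_sub_of_mem_ball (hp : p ∈ ball c R) (hpc : p ≠ c)
    (m n : ℤ) :
    (∮ z in C(c, R), (z - c) ^ m * (p - c) ^ n * (z - p)⁻¹)
      = (if 0 ≤ m then 2 * π * I else 0) * (p - c) ^ (m + n) := by
  have hR : 0 < R := dist_nonneg.trans_lt hp
  simp only [mul_comm _ ((p - c) ^ n), mul_assoc]
  rw [circleIntegral.integral_const_mul, circleIntegral_sub_zpow_mul_inv_sub hR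
      (fun h => (mem_sphere.1 h).not_lt hp) hpc, circleIntegral.integral_sub_inv_of_mem_ball hp,
    zpow_add₀ (sub_ne_zero.2 hpc)]
  split_ifs <;> first | (exfalso; omega) | ring

theorem circleIntegral_zpow_mul_zpow_mul_inv_sub_of_notMem_closedBall (hR : 0 < R)
    (hp : p ∉ closedBall c R) (m n : ℤ) :
    (∮ w in C(c, R), (p - c) ^ m * (w - c) ^ n * (p - w)⁻¹)
      = (if n < 0 then 2 * π * I else 0) * (p - c) ^ (m + n) := by
  have hpc : p ≠ c := fun h => hp (h ▸ mem_closedBall_self hR.le)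
  have hCauchy : (∮ w in C(c, R), (w - p)⁻¹) = 0 :=
    DiffContOnCl.circleIntegral_eq_zero hR.le <| DifferentiableOn.diffContOnCl <| by
      rw [closure_ball c hR.ne']
      exact (differentiableOn_id.sub_const p).inv fun w hw => sub_ne_zero.2 fun h => hp (h ▸ hw)
  have hneg : (∮ w in C(c, R), (w - c) ^ n * (p - w)⁻¹)
      = -∮ w in C(c, R), (w - c) ^ n * (w - p)⁻¹ := by
    simp only [circleIntegral, ← intervalIntegral.integral_neg, ← smul_neg, ← mul_neg, ← inv_neg,
      neg_sub]
  simp only [mul_assoc]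
  rw [circleIntegral.integral_const_mul, hneg, circleIntegral_sub_zpow_mul_inv_sub hR
    (fun h => hp (sphere_subset_closedBall h)) hpc, hCauchy, zpow_add₀ (sub_ne_zero.2 hpc)]
  split_ifs <;> ring

theorem continuousOn_zpow_mul_zpow_mul_inv_sub {r : ℝ} (hr : 0 < r) (hrR : r < R) (m n : ℤ) :
    ContinuousOn (fun q : ℂ × ℂ => (q.1 - c) ^ m * (q.2 - c) ^ n * (q.1 - q.2)⁻¹)
      (sphere c R ×ˢ sphere c r) :=
  (((continuousOn_sub_center_zpow (hr.trans hrR).ne' m).comp continuousOn_fst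
      fun _ hq => hq.1).mul
    ((continuousOn_sub_center_zpow hr.ne' n).comp continuousOn_snd fun _ hq => hq.2)).mul
    ((continuousOn_fst.sub continuousOn_snd).inv₀ fun q hq h =>
      hrR.ne (by rw [← mem_sphere.1 hq.1, ← mem_sphere.1 hq.2, sub_eq_zero.1 h]))

end CauchyKernel

section IteratedCircleIntegral

theorem ContinuousOn.continuous_circleMap_prod {X : Type*} [TopologicalSpace X] {f : ℂ → ℂ → X}
    {c₁ c₂ : ℂ} {R₁ R₂ : ℝ} (hR₁ : 0 ≤ R₁) (hR₂ : 0 ≤ R₂)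
    (hf : ContinuousOn (Function.uncurry f) (sphere c₁ R₁ ×ˢ sphere c₂ R₂)) :
    Continuous fun p : ℝ × ℝ => f (circleMap c₁ R₁ p.1) (circleMap c₂ R₂ p.2) :=
  hf.comp_continuous (f := fun p : ℝ × ℝ => (circleMap c₁ R₁ p.1, circleMap c₂ R₂ p.2))
    ((continuous_circleMap c₁ R₁).prodMap (continuous_circleMap c₂ R₂)) fun p =>
    ⟨circleMap_mem_sphere c₁ hR₁ p.1, circleMap_mem_sphere c₂ hR₂ p.2⟩

variable {E : Type*} [NormedAddCommGroup E] [NormedSpace ℂ E]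

theorem ContinuousLinearMap.circleIntegral_comp_comm [CompleteSpace E] {F : Type*}
    [NormedAddCommGroup F] [NormedSpace ℂ F] [CompleteSpace F] (L : E →L[ℂ] F) {f : ℂ → E}
    {c : ℂ} {R : ℝ} (hf : CircleIntegrable f c R) :
    L (∮ z in C(c, R), f z) = ∮ z in C(c, R), L (f z) := by
  simp only [circleIntegral, ← L.intervalIntegral_comp_comm hf.out, map_smul]

theorem circleIntegral_mul_mul_circleIntegral {𝔸 : Type*} [NormedRing 𝔸] [NormedAlgebra ℂ 𝔸]
    [CompleteSpace 𝔸] {f g : ℂ → 𝔸} {c₁ c₂ : ℂ} {R₁ R₂ : ℝ} (hf : CircleIntegrable f c₁ R₁)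
    (hg : CircleIntegrable g c₂ R₂) (a : 𝔸) :
    (∮ z in C(c₁, R₁), f z) * a * (∮ w in C(c₂, R₂), g w)
      = ∮ z in C(c₁, R₁), ∮ w in C(c₂, R₂), f z * a * g w := by
  have hright :=
    ((ContinuousLinearMap.mul ℂ 𝔸).flip (a * ∮ w in C(c₂, R₂), g w)).circleIntegral_comp_comm hf
  simp only [ContinuousLinearMap.flip_apply, ContinuousLinearMap.mul_apply'] at hright
  rw [mul_assoc, hright]
  congr 1
  funext z
  rw [← mul_assoc]
  exact ((ContinuousLinearMap.mul ℂ 𝔸) (f z * a)).circleIntegral_comp_comm hg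

variable {f : ℂ → ℂ → E} {c₁ c₂ : ℂ} {R₁ R₂ : ℝ}

theorem circleIntegrable_circleIntegral (hR₁ : 0 ≤ R₁) (hR₂ : 0 ≤ R₂)
    (hf : ContinuousOn (Function.uncurry f) (sphere c₁ R₁ ×ˢ sphere c₂ R₂)) :
    CircleIntegrable (fun z => ∮ w in C(c₂, R₂), f z w) c₁ R₁ := by
  refine Continuous.intervalIntegrable ?_ _ _
  refine intervalIntegral.continuous_parametric_intervalIntegral_of_continuous' ?_ _ _
  simp only [deriv_circleMap]
  exact (((continuous_circleMap 0 R₂).comp continuous_snd).mul continuous_const).smul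
    (hf.continuous_circleMap_prod hR₁ hR₂)

theorem circleIntegral_comm (hR₁ : 0 ≤ R₁) (hR₂ : 0 ≤ R₂)
    (hf : ContinuousOn (Function.uncurry f) (sphere c₁ R₁ ×ˢ sphere c₂ R₂)) :
    (∮ z in C(c₁, R₁), ∮ w in C(c₂, R₂), f z w) = ∮ w in C(c₂, R₂), ∮ z in C(c₁, R₁), f z w := by
  have hcont : Continuous fun p : ℝ × ℝ => deriv (circleMap c₁ R₁) p.1 •
      deriv (circleMap c₂ R₂) p.2 • f (circleMap c₁ R₁ p.1) (circleMap c₂ R₂ p.2) := by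
    simp only [deriv_circleMap]
    exact (((continuous_circleMap 0 R₁).comp continuous_fst).mul continuous_const).smul
      ((((continuous_circleMap 0 R₂).comp continuous_snd).mul continuous_const).smul
        (hf.continuous_circleMap_prod hR₁ hR₂))
  have hint : Integrable (fun p : ℝ × ℝ => deriv (circleMap c₁ R₁) p.1 •
      deriv (circleMap c₂ R₂) p.2 • f (circleMap c₁ R₁ p.1) (circleMap c₂ R₂ p.2))
      ((volume.restrict (Ioc 0 (2 * π))).prod (volume.restrict (Ioc 0 (2 * π)))) := by
    rw [Measure.prod_restrict]
    exact (hcont.continuousOn.integrableOn_compact (isCompact_Icc.prod isCompact_Icc)).mono_set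
      (prod_mono Ioc_subset_Icc_self Ioc_subset_Icc_self)
  simp only [circleIntegral, ← intervalIntegral.integral_smul]
  simp only [intervalIntegral.integral_of_le two_pi_pos.le]
  rw [integral_integral_swap hint]
  simp only [smul_comm (deriv (circleMap c₁ R₁) _)]

end IteratedCircleIntegral

section PuncturedDisc

variable {E : Type*} [NormedAddCommGroup E] [NormedSpace ℂ E] {F : ℂ → E} {c : ℂ} {η r R : ℝ}

theorem sphere_subset_ball_diff_center (hr : 0 < r) (hrη : r < η) :
    sphere c r ⊆ ball c η \ {c} := fun _ hz =>
  ⟨mem_ball.2 ((mem_sphere.1 hz).trans_lt hrη), ne_of_mem_sphere hz hr.ne'⟩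

theorem circleIntegral_sub_zpow_smul_eq_of_differentiableOn
    (hF : DifferentiableOn ℂ F (ball c η \ {c})) (hr : 0 < r) (hrR : r ≤ R) (hRη : R < η)
    (n : ℤ) :
    (∮ z in C(c, R), (z - c) ^ n • F z) = ∮ z in C(c, r), (z - c) ^ n • F z := by
  have hd : DifferentiableOn ℂ (fun z => (z - c) ^ n • F z) (ball c η \ {c}) :=
    ((differentiableOn_id.sub_const c).zpow (.inl fun z hz => sub_ne_zero.2 hz.2)).fun_smul hF
  have hsub : closedBall c R \ ball c r ⊆ ball c η \ {c} := fun z hz =>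
    ⟨mem_ball.2 ((mem_closedBall.1 hz.1).trans_lt hRη),
      fun h => hz.2 (h ▸ mem_ball_self hr)⟩
  have hopen : IsOpen (ball c η \ {c}) := isOpen_ball.sdiff isClosed_singleton
  refine Complex.circleIntegral_eq_of_differentiable_on_annulus_off_countable hr hrR
    countable_empty (hd.continuousOn.mono hsub) fun z hz => hd.differentiableAt <| hopen.mem_nhds
      (hsub ⟨ball_subset_closedBall hz.1.1, fun h => hz.1.2 (ball_subset_closedBall h)⟩)

end PuncturedDisc

section Pencil

theorem Ring.inverse_one_sub_smul_mul_mul_inverse_one_sub_smul {𝕜 A : Type*} [Field 𝕜] [Ring A]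
    [Algebra 𝕜 A] {a : A} {z w : 𝕜} (hz : IsUnit (1 - z • a)) (hw : IsUnit (1 - w • a))
    (hzw : z ≠ w) :
    Ring.inverse (1 - z • a) * a * Ring.inverse (1 - w • a)
      = (z - w)⁻¹ • (Ring.inverse (1 - z • a) - Ring.inverse (1 - w • a)) := by
  rw [Ring.inverse_sub_inverse (iff_of_true hz hw),
    show 1 - w • a - (1 - z • a) = (z - w) • a by rw [sub_smul]; abel,
    mul_smul_comm, smul_mul_assoc, inv_smul_smul₀ (sub_ne_zero.2 hzw)]

theorem differentiableOn_inverse_one_sub_smul {𝔸 : Type*} [NormedRing 𝔸] [NormedAlgebra ℂ 𝔸]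
    [CompleteSpace 𝔸] {a : 𝔸} {s : Set ℂ} (hs : ∀ z ∈ s, IsUnit (1 - z • a)) :
    DifferentiableOn ℂ (fun z : ℂ => Ring.inverse (1 - z • a)) s := fun z hz =>
  (((differentiableAt_const 1).sub (differentiableAt_id.smul_const a)).inverse
    (hs z hz)).differentiableWithinAt

end Pencil

noncomputable def laurentCoeff {E : Type*} [NormedAddCommGroup E] [NormedSpace ℂ E]
    (F : ℂ → E) (c : ℂ) (r : ℝ) (j : ℤ) : E :=
  (2 * π * I)⁻¹ • ∮ z in C(c, r), (z - c) ^ (-j - 1) • F z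

section PseudoResolvent

variable {𝔸 : Type*} [NormedRing 𝔸] [NormedAlgebra ℂ 𝔸] [CompleteSpace 𝔸]
  {F : ℂ → 𝔸} {a : 𝔸} {c : ℂ} {η r R : ℝ}

theorem circleIntegral_zpow_smul_mul_mul_circleIntegral_zpow_smul_eq_iterated
    (hF : DifferentiableOn ℂ F (ball c η \ {c}))
    (hres : ∀ z ∈ ball c η \ {c}, ∀ w ∈ ball c η \ {c}, z ≠ w →
      F z * a * F w = (z - w)⁻¹ • (F z - F w))
    (hr : 0 < r) (hrR : r < R) (hRη : R < η) (m n : ℤ) :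
    (∮ z in C(c, R), (z - c) ^ m • F z) * a * (∮ w in C(c, r), (w - c) ^ n • F w)
      = ∮ z in C(c, R), ∮ w in C(c, r),
          ((z - c) ^ m * (w - c) ^ n * (z - w)⁻¹) • F z
            - ((z - c) ^ m * (w - c) ^ n * (z - w)⁻¹) • F w := by
  have hR : 0 < R := hr.trans hrR
  have hSR : sphere c R ⊆ ball c η \ {c} := sphere_subset_ball_diff_center hR hRη
  have hSr : sphere c r ⊆ ball c η \ {c} := sphere_subset_ball_diff_center hr (hrR.trans hRη)
  rw [circleIntegral_mul_mul_circleIntegral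
    (((continuousOn_sub_center_zpow hR.ne' m).fun_smul (hF.continuousOn.mono hSR)).circleIntegrable
      hR.le)
    (((continuousOn_sub_center_zpow hr.ne' n).fun_smul (hF.continuousOn.mono hSr)).circleIntegrable
      hr.le)]
  refine circleIntegral.integral_congr hR.le fun z hz =>
    circleIntegral.integral_congr hr.le fun w hw => ?_
  have hzw : z ≠ w := fun h => hrR.ne (by rw [← mem_sphere.1 hz, ← mem_sphere.1 hw, h])
  rw [smul_mul_assoc, smul_mul_assoc, mul_smul_comm, smul_smul, hres z (hSR hz) w (hSr hw) hzw,
    smul_smul, smul_sub]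

theorem circleIntegral_zpow_smul_mul_mul_circleIntegral_zpow_smul
    (hF : DifferentiableOn ℂ F (ball c η \ {c}))
    (hres : ∀ z ∈ ball c η \ {c}, ∀ w ∈ ball c η \ {c}, z ≠ w →
      F z * a * F w = (z - w)⁻¹ • (F z - F w))
    (hr : 0 < r) (hrR : r < R) (hRη : R < η) (m n : ℤ) :
    (∮ z in C(c, R), (z - c) ^ m • F z) * a * (∮ w in C(c, r), (w - c) ^ n • F w)
      = ((if n < 0 then 2 * π * I else 0) - if 0 ≤ m then 2 * π * I else 0) •
          ∮ z in C(c, r), (z - c) ^ (m + n) • F z := by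
  have hR : 0 < R := hr.trans hrR
  have hFR : ContinuousOn F (sphere c R) :=
    hF.continuousOn.mono (sphere_subset_ball_diff_center hR hRη)
  have hFr : ContinuousOn F (sphere c r) :=
    hF.continuousOn.mono (sphere_subset_ball_diff_center hr (hrR.trans hRη))
  have hψ := continuousOn_zpow_mul_zpow_mul_inv_sub (c := c) hr hrR m n
  have hψF : ContinuousOn
      (Function.uncurry fun z w => ((z - c) ^ m * (w - c) ^ n * (z - w)⁻¹) • F w)
      (sphere c R ×ˢ sphere c r) :=
    hψ.smul (hFr.comp continuousOn_snd fun _ hq => hq.2)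
  have hinner : ∀ z ∈ sphere c R, (∮ w in C(c, r),
      ((z - c) ^ m * (w - c) ^ n * (z - w)⁻¹) • F z - ((z - c) ^ m * (w - c) ^ n * (z - w)⁻¹) • F w)
      = ((if n < 0 then 2 * π * I else 0) * (z - c) ^ (m + n)) • F z
        - ∮ w in C(c, r), ((z - c) ^ m * (w - c) ^ n * (z - w)⁻¹) • F w := by
    intro z hz
    have hψz : ContinuousOn (fun w => (z - c) ^ m * (w - c) ^ n * (z - w)⁻¹) (sphere c r) :=
      hψ.comp (f := fun w => (z, w)) (continuousOn_const.prodMk continuousOn_id)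
        fun w hw => ⟨hz, hw⟩
    rw [circleIntegral.integral_sub ((hψz.fun_smul continuousOn_const).circleIntegrable hr.le)
      ((hψz.fun_smul hFr).circleIntegrable hr.le), circleIntegral.integral_smul_const,
      circleIntegral_zpow_mul_zpow_mul_inv_sub_of_notMem_closedBall hr fun h =>
        (mem_closedBall.1 h).not_gt (by rw [mem_sphere.1 hz]; exact hrR)]
  have houter : ∀ w ∈ sphere c r,
      (∮ z in C(c, R), ((z - c) ^ m * (w - c) ^ n * (z - w)⁻¹) • F w)
      = ((if 0 ≤ m then 2 * π * I else 0) * (w - c) ^ (m + n)) • F w := fun w hw => by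
    rw [circleIntegral.integral_smul_const, circleIntegral_zpow_mul_zpow_mul_inv_sub_of_mem_ball
      (mem_ball.2 (by rw [mem_sphere.1 hw]; exact hrR)) (ne_of_mem_sphere hw hr.ne')]
  rw [circleIntegral_zpow_smul_mul_mul_circleIntegral_zpow_smul_eq_iterated hF hres hr hrR hRη,
    circleIntegral.integral_congr hR.le hinner, circleIntegral.integral_sub
      ((continuousOn_const.fun_mul (continuousOn_sub_center_zpow hR.ne' _)).fun_smul hFR
        |>.circleIntegrable hR.le)
      (circleIntegrable_circleIntegral hR.le hr.le hψF),
    circleIntegral_comm hR.le hr.le hψF, circleIntegral.integral_congr hr.le houter]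
  simp only [← smul_smul, circleIntegral.integral_smul]
  rw [sub_smul, circleIntegral_sub_zpow_smul_eq_of_differentiableOn hF hr hrR.le hRη]

theorem laurentCoeff_mul_mul_laurentCoeff (hF : DifferentiableOn ℂ F (ball c η \ {c}))
    (hres : ∀ z ∈ ball c η \ {c}, ∀ w ∈ ball c η \ {c}, z ≠ w →
      F z * a * F w = (z - w)⁻¹ • (F z - F w))
    (hr : 0 < r) (hrη : r < η) (j k : ℤ) :
    laurentCoeff F c r j * a * laurentCoeff F c r k
      = ((if 0 ≤ j then 1 else 0) + (if 0 ≤ k then 1 else 0) - 1 : ℂ) •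
          laurentCoeff F c r (j + k + 1) := by
  obtain ⟨R, hrR, hRη⟩ := exists_between hrη
  simp only [laurentCoeff, smul_mul_assoc, mul_smul_comm, smul_smul]
  rw [← circleIntegral_sub_zpow_smul_eq_of_differentiableOn hF hr hrR.le hRη (-j - 1),
    circleIntegral_zpow_smul_mul_mul_circleIntegral_zpow_smul hF hres hr hrR hRη, smul_smul,
    show -j - 1 + (-k - 1) = -(j + k + 1) - 1 by ring]
  congr 1
  have h2πI : (2 * π * I : ℂ) ≠ 0 := by simp [pi_ne_zero]
  split_ifs <;> first | (exfalso; omega) | (field_simp; ring)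

end PseudoResolvent

theorem statement2_general
    {B : Type*} [NormedAddCommGroup B] [NormedSpace ℂ B] [CompleteSpace B]
    (A₁ : B →L[ℂ] B) (η : ℝ)
    (hinv : ∀ z : ℂ, ‖z‖ < 1 + η → z ≠ 1 → IsUnit (1 - z • A₁))
    (r : ℝ) (hr0 : 0 < r) (hrη : r < η) :
    (∀ j k : ℤ,
      laurentN A₁ r j * A₁ * laurentN A₁ r k
        = ((1 : ℂ) - (if 0 ≤ j then 1 else 0) - (if 0 ≤ k then 1 else 0)) •
            laurentN A₁ r (j + k + 1)) ∧
    (laurentN A₁ r (-1) * A₁) * (laurentN A₁ r (-1) * A₁) = laurentN A₁ r (-1) * A₁ := by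
  have hunit : ∀ z ∈ ball (1 : ℂ) η \ {1}, IsUnit (1 - z • A₁) := fun z hz =>
    hinv z (by linarith [norm_le_norm_sub_add z 1, mem_ball_iff_norm.1 hz.1, norm_one (α := ℂ)])
      hz.2
  have hN : ∀ j, laurentN A₁ r j = -laurentCoeff (fun z => Ring.inverse (1 - z • A₁)) 1 r j :=
    fun j => neg_smul _ _
  have hmain : ∀ j k : ℤ, laurentN A₁ r j * A₁ * laurentN A₁ r k
      = ((1 : ℂ) - (if 0 ≤ j then 1 else 0) - (if 0 ≤ k then 1 else 0)) •
          laurentN A₁ r (j + k + 1) := by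
    intro j k
    rw [hN, hN, hN, neg_mul, mul_neg, neg_mul, neg_neg, laurentCoeff_mul_mul_laurentCoeff
      (differentiableOn_inverse_one_sub_smul hunit)
      (fun z hz w hw =>
        Ring.inverse_one_sub_smul_mul_mul_inverse_one_sub_smul (hunit z hz) (hunit w hw))
      hr0 hrη, smul_neg, ← neg_smul]
    congr 1
    ring
  refine ⟨hmain, ?_⟩
  have hidem : laurentN A₁ r (-1) * A₁ * laurentN A₁ r (-1) = laurentN A₁ r (-1) := by
    simpa using hmain (-1) (-1)
  rw [← mul_assoc, hidem]

/-- under the unit-root assumption, `N_j A₁ N_k = (1 - η_j - η_k) N_{j+k+1}`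
where `η_j = 1` if `j ≥ 0` and `η_j = 0` otherwise; consequently `N_{-1} A₁` is idempotent. -/
theorem statement2
    {B : Type*} [NormedAddCommGroup B] [NormedSpace ℂ B] [CompleteSpace B]
    (A₁ : B →L[ℂ] B) (η : ℝ) (hη : 0 < η)
    (hinv : ∀ z : ℂ, ‖z‖ < 1 + η → z ≠ 1 → IsUnit (1 - z • A₁))
    (hnot : ¬ IsUnit (1 - A₁))
    (r : ℝ) (hr0 : 0 < r) (hrη : r < η) :
    (∀ j k : ℤ,
      laurentN A₁ r j * A₁ * laurentN A₁ r k
        = ((1 : ℂ) - (if 0 ≤ j then 1 else 0) - (if 0 ≤ k then 1 else 0)) •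
            laurentN A₁ r (j + k + 1)) ∧
    (laurentN A₁ r (-1) * A₁) * (laurentN A₁ r (-1) * A₁) = laurentN A₁ r (-1) * A₁ :=
  statement2_general A₁ η hinv r hr0 hrη
end

section
/- Under the unit-root assumption, P x = x for every x ∈ ker(I − A₁); in particular ker(I − A₁) ⊆ ran P. -/
/-!
On a fixed vector `x` of `A₁` the pencil acts as a scalar, `(I - z A₁) x = (1 - z) x`, so
`(I - z A₁)⁻¹ x = (1 - z)⁻¹ x` on the whole circle. Hence `N_{-1} x` is `x` times
`-(2πi)⁻¹ ∮ (1 - z)⁻¹ dz = 1`, and `P x = N_{-1} (A₁ x) = N_{-1} x = x`.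
-/

open Metric ContinuousLinearMap

theorem ContinuousOn.ringInverse {X R : Type*} [TopologicalSpace X] [NormedRing R]
    [HasSummableGeomSeries R] {f : X → R} {s : Set X} (hf : ContinuousOn f s)
    (hunit : ∀ x ∈ s, IsUnit (f x)) : ContinuousOn (fun x => Ring.inverse (f x)) s := by
  intro x hx
  obtain ⟨u, hu⟩ := hunit x hx
  have hinv := NormedRing.inverse_continuousAt u
  rw [hu] at hinv
  exact hinv.comp_continuousWithinAt (hf x hx)

theorem circleIntegral_apply {E F : Type*} [NormedAddCommGroup E] [NormedSpace ℂ E]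
    [NormedAddCommGroup F] [NormedSpace ℂ F] [CompleteSpace F] {f : ℂ → E →L[ℂ] F}
    {c : ℂ} {R : ℝ} (hf : CircleIntegrable f c R) (v : E) :
    (∮ z in C(c, R), f z) v = ∮ z in C(c, R), f z v := by
  simp only [circleIntegral, intervalIntegral_apply hf.out, smul_apply]

theorem circleIntegral.integral_center_sub_inv (c : ℂ) {R : ℝ} (hR : R ≠ 0) :
    (∮ z in C(c, R), (c - z)⁻¹) = -(2 * Real.pi * Complex.I) := by
  have hneg : (fun z : ℂ => (c - z)⁻¹) = fun z => (-1 : ℂ) * (z - c)⁻¹ := by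
    funext z
    rw [← neg_sub, inv_neg, neg_one_mul]
  rw [hneg, circleIntegral.integral_const_mul, circleIntegral.integral_sub_center_inv c hR,
    neg_one_mul]

section FixedVector

variable {B : Type*} [NormedAddCommGroup B] [NormedSpace ℂ B]

theorem ringInverse_one_sub_smul_apply_of_apply_eq_self {A : B →L[ℂ] B} {z : ℂ}
    (hunit : IsUnit (1 - z • A)) (hz : z ≠ 1) {x : B} (hx : A x = x) :
    Ring.inverse (1 - z • A) x = (1 - z)⁻¹ • x := by
  have hpencil : (1 - z • A) ((1 - z)⁻¹ • x) = x := by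
    rw [map_smul, sub_apply, one_apply_eq_self, smul_apply, hx]
    nth_rw 1 [← one_smul ℂ x]
    rw [← sub_smul, inv_smul_smul₀ (sub_ne_zero.2 hz.symm)]
  conv_lhs => rw [← hpencil, ← mul_apply_eq_comp, Ring.inverse_mul_cancel _ hunit,
    one_apply_eq_self]

variable [CompleteSpace B]

theorem laurentN_neg_one_apply_of_apply_eq_self {A : B →L[ℂ] B} {r : ℝ} (hr : 0 < r)
    (hunit : ∀ z ∈ sphere (1 : ℂ) r, IsUnit (1 - z • A)) {x : B} (hx : A x = x) :
    laurentN A r (-1) x = x := by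
  have hint : CircleIntegrable (fun z : ℂ => Ring.inverse (1 - z • A)) 1 r :=
    ContinuousOn.circleIntegrable hr.le <|
      (continuous_const.sub (continuous_id.smul continuous_const)).continuousOn.ringInverse
        hunit
  have hresolvent : Set.EqOn (fun z : ℂ => Ring.inverse (1 - z • A) x)
      (fun z => (1 - z)⁻¹ • x) (sphere 1 r) := fun z hz =>
    ringInverse_one_sub_smul_apply_of_apply_eq_self (hunit z hz)
      (ne_of_mem_sphere hz hr.ne') hx
  have h2pi : (2 * Real.pi * Complex.I : ℂ) ≠ 0 := by simp [Real.pi_ne_zero]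
  simp only [laurentN, neg_neg, sub_self, zpow_zero, one_smul, smul_apply]
  rw [circleIntegral_apply hint, circleIntegral.integral_congr hr.le hresolvent,
    circleIntegral.integral_smul_const, circleIntegral.integral_center_sub_inv 1 hr.ne',
    smul_smul, neg_inv, inv_mul_cancel₀ (neg_ne_zero.2 h2pi), one_smul]

end FixedVector

theorem statement8_general
    {B : Type*} [NormedAddCommGroup B] [NormedSpace ℂ B] [CompleteSpace B]
    (A₁ : B →L[ℂ] B) (η : ℝ)
    (hinv : ∀ z : ℂ, ‖z‖ < 1 + η → z ≠ 1 → IsUnit (1 - z • A₁))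
    (r : ℝ) (hr0 : 0 < r) (hrη : r < η)
    (P : B →L[ℂ] B) (hP : P = laurentN A₁ r (-1) * A₁) :
    (∀ x : B, x ∈ LinearMap.ker ((1 - A₁ : B →L[ℂ] B) : B →ₗ[ℂ] B) → P x = x) ∧
    LinearMap.ker ((1 - A₁ : B →L[ℂ] B) : B →ₗ[ℂ] B) ≤ LinearMap.range (P : B →ₗ[ℂ] B) := by
  have hunit : ∀ z ∈ sphere (1 : ℂ) r, IsUnit (1 - z • A₁) := by
    intro z hz
    refine hinv z ?_ (ne_of_mem_sphere hz hr0.ne')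
    calc ‖z‖ ≤ ‖(1 : ℂ)‖ + ‖z - 1‖ := norm_le_norm_add_norm_sub' z 1
      _ = 1 + r := by rw [norm_one, ← dist_eq_norm, mem_sphere.1 hz]
      _ < 1 + η := by linarith
  have hfix : ∀ x ∈ LinearMap.ker ((1 - A₁ : B →L[ℂ] B) : B →ₗ[ℂ] B), P x = x := by
    intro x hx
    have hAx : A₁ x = x := (sub_eq_zero.1 hx).symm
    rw [hP, mul_apply_eq_comp, hAx, laurentN_neg_one_apply_of_apply_eq_self hr0 hunit hAx]
  exact ⟨hfix, fun x hx => ⟨x, hfix x hx⟩⟩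

/-- with `P := N_{-1} A₁`, under the unit-root assumption, `P x = x` for
every `x ∈ ker (I - A₁)`; in particular `ker (I - A₁) ⊆ ran P`. -/
theorem statement8
    {B : Type*} [NormedAddCommGroup B] [NormedSpace ℂ B] [CompleteSpace B]
    (A₁ : B →L[ℂ] B) (η : ℝ) (hη : 0 < η)
    (hinv : ∀ z : ℂ, ‖z‖ < 1 + η → z ≠ 1 → IsUnit (1 - z • A₁))
    (hnot : ¬ IsUnit (1 - A₁))
    (r : ℝ) (hr0 : 0 < r) (hrη : r < η)
    (P : B →L[ℂ] B) (hP : P = laurentN A₁ r (-1) * A₁) :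
    (∀ x : B, x ∈ LinearMap.ker ((1 - A₁ : B →L[ℂ] B) : B →ₗ[ℂ] B) → P x = x) ∧
    LinearMap.ker ((1 - A₁ : B →L[ℂ] B) : B →ₗ[ℂ] B) ≤ LinearMap.range (P : B →ₗ[ℂ] B) :=
  statement8_general A₁ η hinv r hr0 hrη P hP
end

section
/- Assume the unit-root assumption and that B = ran(I − A₁) ⊕ ker(I − A₁) as an internal direct sum of closed subspaces (the I(1) condition). Then for every complex z with |z| < 1 + η and z ≠ 1, (I − zA₁)^{−1} = −(z − 1)^{−1}P + ∑_{j=0}^∞ A₁^j(I − P) z^j, where the series converges in operator norm; moreover there exist a constant C ≥ 0 and a ∈ (0,1) such that ‖A₁^j(I − P)‖ ≤ C a^j for every j ≥ 0. -/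
/-!
Let `Q` be the projection onto `ker (I - A₁)` along `ran (I - A₁)`; it is idempotent and
`A₁ Q = Q A₁ = Q`. Removing the unit root, `M := A₁ - Q`, gives
`I - z M = (I - z A₁)(I - Q) + Q`, which is invertible for `z ≠ 1` because `Q` commutes with
`I - z A₁`, and for `z = 1` because `I - A₁ + Q` is bijective by the I(1) condition. So
`z ↦ (I - z M)⁻¹` is holomorphic on `|z| < 1 + η`, whence its Taylor series `∑ zʲ Mʲ` converges
there and `Mʲ` decays geometrically. Since `Mʲ (I - Q) = A₁ʲ (I - Q)` and
`(I - z A₁)⁻¹ + (z - 1)⁻¹ Q = (I - z M)⁻¹ (I - Q)`, the pencil has a simple pole at `1` with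
residue `-Q`, so `N₋₁ = Q` and `P = Q A₁ = Q`.
-/

open scoped NNReal
open Metric

namespace IsIdempotentElem

variable {R : Type*} [Ring R] {q : R}

theorem mul_one_sub_add_mul_one_sub_add (hq : IsIdempotentElem q) {u v : R}
    (hv : Commute q v) (huv : u * v = 1) : (u * (1 - q) + q) * (v * (1 - q) + q) = 1 := by
  have hv' : Commute (1 - q) v := (Commute.one_left v).sub_left hv
  calc (u * (1 - q) + q) * (v * (1 - q) + q)
      = u * ((1 - q) * v) * (1 - q) + u * ((1 - q) * q) + q * v * (1 - q) + q * q := by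
        noncomm_ring
    _ = 1 := by
        rw [hv'.eq, hv.eq, ← mul_assoc, huv, one_mul, hq.one_sub.eq, hq.one_sub_mul_self,
          mul_assoc, hq.mul_one_sub_self, hq.eq]
        noncomm_ring

def unitMulOneSubAdd (hq : IsIdempotentElem q) (u : Rˣ) (hu : Commute q u) : Rˣ where
  val := u * (1 - q) + q
  inv := ↑u⁻¹ * (1 - q) + q
  val_inv := hq.mul_one_sub_add_mul_one_sub_add hu.units_inv_right u.mul_inv
  inv_val := hq.mul_one_sub_add_mul_one_sub_add hu u.inv_mul

theorem isUnit_mul_one_sub_add (hq : IsIdempotentElem q) {u : R} (hu : IsUnit u)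
    (hc : Commute q u) : IsUnit (u * (1 - q) + q) := by
  obtain ⟨u, rfl⟩ := hu
  exact (hq.unitMulOneSubAdd u hc).isUnit

theorem inverse_mul_one_sub_add (hq : IsIdempotentElem q) {u : R} (hu : IsUnit u)
    (hc : Commute q u) : Ring.inverse (u * (1 - q) + q) = Ring.inverse u * (1 - q) + q := by
  obtain ⟨u, rfl⟩ := hu
  rw [Ring.inverse_unit]
  exact Ring.inverse_unit (hq.unitMulOneSubAdd u hc)

end IsIdempotentElem

section Pencil

variable {𝕜 R : Type*} [Field 𝕜] [Ring R] [Algebra 𝕜 R] {a q : R}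

theorem one_sub_smul_sub_eq (haq : a * q = q) (z : 𝕜) :
    1 - z • (a - q) = (1 - z • a) * (1 - q) + q := by
  rw [sub_mul, one_mul, mul_sub, mul_one, smul_mul_assoc, haq]
  module

theorem sub_pow_mul_one_sub (hq : IsIdempotentElem q) (haq : a * q = q) (hqa : q * a = q)
    (n : ℕ) : (a - q) ^ n * (1 - q) = a ^ n * (1 - q) := by
  have hc : Commute a (1 - q) := by
    rw [Commute, SemiconjBy, mul_sub, sub_mul, haq, hqa, mul_one, one_mul]
  have hstep : (a - q) * (1 - q) = (1 - q) * a := by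
    rw [← hc.eq, sub_mul, hq.mul_one_sub_self, sub_zero]
  induction n with
  | zero => simp
  | succ n ih =>
    rw [pow_succ, mul_assoc, hstep, ← mul_assoc, ih, mul_assoc, ← hc.eq, ← mul_assoc, ← pow_succ]

theorem commute_one_sub_smul (haq : a * q = q) (hqa : q * a = q) (z : 𝕜) :
    Commute q (1 - z • a) :=
  (Commute.one_right q).sub_right (Commute.smul_right (by rw [Commute, SemiconjBy, haq, hqa]) z)

theorem isUnit_one_sub_smul_sub (hq : IsIdempotentElem q) (haq : a * q = q) (hqa : q * a = q)
    {z : 𝕜} (hu : IsUnit (1 - z • a)) : IsUnit (1 - z • (a - q)) := by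
  rw [one_sub_smul_sub_eq haq]
  exact hq.isUnit_mul_one_sub_add hu (commute_one_sub_smul haq hqa z)

theorem inverse_one_sub_smul_mul (haq : a * q = q) {z : 𝕜} (hz : z ≠ 1)
    (hu : IsUnit (1 - z • a)) : Ring.inverse (1 - z • a) * q = (1 - z)⁻¹ • q := by
  have h : (1 - z • a) * q = (1 - z) • q := by
    rw [sub_mul, one_mul, smul_mul_assoc, haq, sub_smul, one_smul]
  rw [eq_inv_smul_iff₀ (sub_ne_zero.2 hz.symm), ← mul_smul_comm, ← h,
    Ring.inverse_mul_cancel_left _ _ hu]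

theorem inverse_one_sub_smul_add_inv_smul (hq : IsIdempotentElem q) (haq : a * q = q)
    (hqa : q * a = q) {z : 𝕜} (hz : z ≠ 1) (hu : IsUnit (1 - z • a)) :
    Ring.inverse (1 - z • a) + (z - 1)⁻¹ • q = Ring.inverse (1 - z • (a - q)) * (1 - q) := by
  rw [one_sub_smul_sub_eq haq, hq.inverse_mul_one_sub_add hu (commute_one_sub_smul haq hqa z),
    add_mul, mul_assoc, hq.one_sub.eq, hq.mul_one_sub_self, add_zero, mul_sub, mul_one,
    inverse_one_sub_smul_mul haq hz hu, ← neg_sub z 1, inv_neg, neg_smul, sub_neg_eq_add]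

end Pencil

namespace ContinuousLinearMap

variable {𝕜 E : Type*} [NontriviallyNormedField 𝕜] [NormedAddCommGroup E] [NormedSpace 𝕜 E]
  (T : E →L[𝕜] E) (h : T.ker.IsTopCompl T.range)

theorem mul_projectionL_ker_range : T * T.ker.projectionL T.range h = 0 := by
  ext x
  exact Submodule.projectionL_apply_mem h x

theorem projectionL_ker_range_mul : T.ker.projectionL T.range h * T = 0 := by
  ext x
  exact Submodule.projectionL_apply_right h ⟨T x, x, rfl⟩

theorem isUnit_add_projectionL_ker_range [CompleteSpace E] :
    IsUnit (T + T.ker.projectionL T.range h) := by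
  set Q := T.ker.projectionL T.range h
  have hTQ (x : E) : T (Q x) = 0 := Submodule.projectionL_apply_mem h x
  have hQQ (x : E) : Q (Q x) = Q x :=
    Submodule.projectionL_apply_left h ⟨Q x, Submodule.projectionL_apply_mem h x⟩
  rw [isUnit_iff_bijective]
  constructor
  · refine (injective_iff_map_eq_zero _).2 fun x hx => ?_
    have hQx : Q x = 0 :=
      Submodule.disjoint_def.1 h.isCompl.disjoint _ (Submodule.projectionL_apply_mem h x)
        ⟨-x, by rw [map_neg]; exact neg_eq_of_add_eq_zero_right hx⟩
    have hTx : T x = 0 := by rwa [add_apply, hQx, add_zero] at hx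
    rw [← hQx, eq_comm, Submodule.projectionL_eq_self_iff]
    exact hTx
  · intro y
    obtain ⟨w, hw⟩ : y - Q y ∈ T.range := by
      rw [← Submodule.projectionL_apply_eq_zero_iff h, map_sub, hQQ, sub_self]
    refine ⟨w - Q w + Q y, ?_⟩
    simp only [add_apply, map_add, map_sub, hTQ, hQQ]
    rw [show T w = y - Q y from hw]
    abel

end ContinuousLinearMap

section BanachAlgebra

variable {𝒜 : Type*} [NormedRing 𝒜] [NormedAlgebra ℂ 𝒜] [CompleteSpace 𝒜]

theorem differentiableAt_inverse_one_sub_smul {b : 𝒜} {z : ℂ} (hu : IsUnit (1 - z • b)) :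
    DifferentiableAt ℂ (fun w : ℂ => Ring.inverse (1 - w • b)) z :=
  (differentiableAt_inverse hu).comp z
    ((differentiable_id.smul_const b).const_sub 1).differentiableAt

theorem hasFPowerSeriesOnBall_inverse_one_sub_smul_of_forall_isUnit {b : 𝒜} {ρ : ℝ}
    (h : ∀ z : ℂ, ‖z‖ < ρ → IsUnit (1 - z • b)) {r : ℝ≥0} (hr : 0 < r) (hrρ : r < ρ) :
    HasFPowerSeriesOnBall (fun z : ℂ => Ring.inverse (1 - z • b))
      (fun n => ContinuousMultilinearMap.mkPiRing ℂ (Fin n) (b ^ n)) 0 r :=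
  (spectrum.hasFPowerSeriesOnBall_inverse_one_sub_smul ℂ b).exchange_radius
    (DifferentiableOn.hasFPowerSeriesOnBall (fun z hz =>
      (differentiableAt_inverse_one_sub_smul
        (h z ((mem_closedBall_zero_iff.1 hz).trans_lt hrρ))).differentiableWithinAt) hr)

theorem hasSum_smul_pow_of_forall_isUnit {b : 𝒜} {ρ : ℝ}
    (h : ∀ z : ℂ, ‖z‖ < ρ → IsUnit (1 - z • b)) {z : ℂ} (hz : ‖z‖ < ρ) :
    HasSum (fun n => z ^ n • b ^ n) (Ring.inverse (1 - z • b)) := by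
  obtain ⟨s, hzs, hsρ⟩ := exists_between hz
  lift s to ℝ≥0 using (norm_nonneg z).trans hzs.le
  have H := hasFPowerSeriesOnBall_inverse_one_sub_smul_of_forall_isUnit h
    (NNReal.coe_pos.1 ((norm_nonneg z).trans_lt hzs)) hsρ
  simpa using H.hasSum (mem_eball_zero_iff.2 (enorm_lt_coe.2 hzs))

theorem exists_norm_pow_le_mul_inv_pow_of_forall_isUnit {b : 𝒜} {ρ : ℝ}
    (h : ∀ z : ℂ, ‖z‖ < ρ → IsUnit (1 - z • b)) {t : ℝ} (ht : 0 < t) (htρ : t < ρ) :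
    ∃ C, 0 ≤ C ∧ ∀ n, ‖b ^ n‖ ≤ C * t⁻¹ ^ n := by
  obtain ⟨s, hts, hsρ⟩ := exists_between htρ
  lift s to ℝ≥0 using ht.le.trans hts.le
  lift t to ℝ≥0 using ht.le
  have H := hasFPowerSeriesOnBall_inverse_one_sub_smul_of_forall_isUnit h
    (NNReal.coe_pos.1 (ht.trans hts)) hsρ
  obtain ⟨C, hC, hbound⟩ := FormalMultilinearSeries.norm_mul_pow_le_of_lt_radius _
    ((ENNReal.coe_lt_coe.2 (NNReal.coe_lt_coe.1 hts)).trans_le H.r_le)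
  refine ⟨C, hC.le, fun n => ?_⟩
  rw [inv_pow, le_mul_inv_iff₀ (by positivity)]
  simpa only [ContinuousMultilinearMap.norm_mkPiRing] using hbound n

theorem circleIntegral_inverse_one_sub_smul {a q : 𝒜} (hq : IsIdempotentElem q)
    (haq : a * q = q) (hqa : q * a = q) {r : ℝ} (hr : 0 < r)
    (hu : ∀ z ∈ sphere (1 : ℂ) r, IsUnit (1 - z • a))
    (hw : ∀ z ∈ closedBall (1 : ℂ) r, IsUnit (1 - z • (a - q))) :
    (∮ z in C(1, r), Ring.inverse (1 - z • a)) = -(2 * Real.pi * Complex.I) • q := by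
  -- `(1 - z • a)⁻¹ = (z - 1)⁻¹ • F z` on the circle, with `F` holomorphic on the disc and
  -- `F 1 = -q`: the residue at `1` is read off from Cauchy's integral formula.
  set F : ℂ → 𝒜 := fun z => (z - 1) • (Ring.inverse (1 - z • (a - q)) * (1 - q)) - q
  have hF : DifferentiableOn ℂ F (closedBall 1 r) := fun z hz =>
    (((differentiableAt_id.sub_const 1).smul
      ((differentiableAt_inverse_one_sub_smul (hw z hz)).mul_const _)).sub_const q)
      |>.differentiableWithinAt
  have heq : Set.EqOn (fun z => Ring.inverse (1 - z • a)) (fun z => (z - 1)⁻¹ • F z)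
      (sphere 1 r) := by
    intro z hz
    have hz1 : z ≠ 1 := ne_of_mem_sphere hz hr.ne'
    dsimp only [F]
    rw [smul_sub, smul_smul, inv_mul_cancel₀ (sub_ne_zero.2 hz1), one_smul,
      ← inverse_one_sub_smul_add_inv_smul hq haq hqa hz1 (hu z hz), add_sub_cancel_right]
  rw [circleIntegral.integral_congr hr.le heq, hF.circleIntegral_sub_inv_smul (mem_ball_self hr)]
  simp [F]

theorem exists_norm_pow_mul_one_sub_le {a q : 𝒜} (hq : IsIdempotentElem q) (haq : a * q = q)
    (hqa : q * a = q) {ρ : ℝ} (h : ∀ z : ℂ, ‖z‖ < ρ → IsUnit (1 - z • (a - q))) {t : ℝ}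
    (ht : 0 < t) (htρ : t < ρ) : ∃ C, 0 ≤ C ∧ ∀ n, ‖a ^ n * (1 - q)‖ ≤ C * t⁻¹ ^ n := by
  obtain ⟨C, hC, hdecay⟩ := exists_norm_pow_le_mul_inv_pow_of_forall_isUnit h ht htρ
  refine ⟨C * ‖1 - q‖, by positivity, fun n => ?_⟩
  calc ‖a ^ n * (1 - q)‖ = ‖(a - q) ^ n * (1 - q)‖ := by rw [sub_pow_mul_one_sub hq haq hqa]
    _ ≤ ‖(a - q) ^ n‖ * ‖1 - q‖ := norm_mul_le _ _
    _ ≤ C * t⁻¹ ^ n * ‖1 - q‖ := by gcongr; exact hdecay n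
    _ = C * ‖1 - q‖ * t⁻¹ ^ n := by ring

theorem hasSum_smul_pow_mul_one_sub {a q : 𝒜} (hq : IsIdempotentElem q) (haq : a * q = q)
    (hqa : q * a = q) {ρ : ℝ} (h : ∀ z : ℂ, ‖z‖ < ρ → IsUnit (1 - z • (a - q))) {z : ℂ}
    (hz : ‖z‖ < ρ) (hz1 : z ≠ 1) (hu : IsUnit (1 - z • a)) :
    HasSum (fun n => z ^ n • (a ^ n * (1 - q))) (Ring.inverse (1 - z • a) + (z - 1)⁻¹ • q) := by
  rw [inverse_one_sub_smul_add_inv_smul hq haq hqa hz1 hu]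
  simpa only [smul_mul_assoc, sub_pow_mul_one_sub hq haq hqa] using
    (hasSum_smul_pow_of_forall_isUnit h hz).mul_right (1 - q)

end BanachAlgebra

theorem laurentN_neg_one_eq {B : Type*} [NormedAddCommGroup B] [NormedSpace ℂ B]
    [CompleteSpace B] {A Q : B →L[ℂ] B} (hQ : IsIdempotentElem Q) (hAQ : A * Q = Q)
    (hQA : Q * A = Q) {r : ℝ} (hr : 0 < r) (hu : ∀ z ∈ sphere (1 : ℂ) r, IsUnit (1 - z • A))
    (hw : ∀ z ∈ closedBall (1 : ℂ) r, IsUnit (1 - z • (A - Q))) :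
    laurentN A r (-1) = Q := by
  rw [laurentN]
  simp only [neg_neg, sub_self, zpow_zero, one_smul]
  rw [circleIntegral_inverse_one_sub_smul hQ hAQ hQA hr hu hw, smul_smul, neg_mul_neg,
    inv_mul_cancel₀ Complex.two_pi_I_ne_zero, one_smul]

theorem statement10_general
    {B : Type*} [NormedAddCommGroup B] [NormedSpace ℂ B] [CompleteSpace B]
    (A₁ : B →L[ℂ] B) (η : ℝ)
    (hinv : ∀ z : ℂ, ‖z‖ < 1 + η → z ≠ 1 → IsUnit (1 - z • A₁))
    (r : ℝ) (hr0 : 0 < r) (hrη : r < η)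
    (P : B →L[ℂ] B) (hP : P = laurentN A₁ r (-1) * A₁)
    (hcompl : IsCompl (LinearMap.range (((1 - A₁ : B →L[ℂ] B) : B →ₗ[ℂ] B))) (LinearMap.ker (((1 - A₁ : B →L[ℂ] B) : B →ₗ[ℂ] B))))
    (hclosed : IsClosed ((LinearMap.range (((1 - A₁ : B →L[ℂ] B) : B →ₗ[ℂ] B)) : Submodule ℂ B) : Set B)) :
    (∃ C : ℝ, 0 ≤ C ∧ ∃ a : ℝ, a ∈ Set.Ioo (0 : ℝ) 1 ∧
      ∀ j : ℕ, ‖A₁ ^ j * (1 - P)‖ ≤ C * a ^ j) ∧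
    (∀ z : ℂ, ‖z‖ < 1 + η → z ≠ 1 →
      HasSum (fun j : ℕ => z ^ j • (A₁ ^ j * (1 - P)))
        (Ring.inverse (1 - z • A₁) + (z - 1)⁻¹ • P)) := by
  have hT : (1 - A₁).ker.IsTopCompl (1 - A₁).range :=
    Submodule.IsCompl.isTopCompl_of_isClosed hcompl.symm
      (ContinuousLinearMap.isClosed_ker _) hclosed
  set Q := (1 - A₁).ker.projectionL (1 - A₁).range hT
  have hQ : IsIdempotentElem Q := Submodule.isIdempotentElem_projectionL hT
  have hAQ : A₁ * Q = Q := by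
    have h := (1 - A₁).mul_projectionL_ker_range hT
    rwa [sub_mul, one_mul, sub_eq_zero, eq_comm] at h
  have hQA : Q * A₁ = Q := by
    have h := (1 - A₁).projectionL_ker_range_mul hT
    rwa [mul_sub, mul_one, sub_eq_zero, eq_comm] at h
  have hM : ∀ z : ℂ, ‖z‖ < 1 + η → IsUnit (1 - z • (A₁ - Q)) := by
    intro z hz
    rcases eq_or_ne z 1 with rfl | hz1
    · rw [one_smul, ← sub_add]
      exact (1 - A₁).isUnit_add_projectionL_ker_range hT
    · exact isUnit_one_sub_smul_sub hQ hAQ hQA (hinv z hz hz1)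
  have hball : ∀ z ∈ closedBall (1 : ℂ) r, ‖z‖ < 1 + η := fun z hz =>
    (norm_le_of_mem_closedBall hz).trans_lt (by rw [norm_one]; linarith)
  have hPQ : P = Q := by
    rw [hP, laurentN_neg_one_eq hQ hAQ hQA hr0
      (fun z hz => hinv z (hball z (sphere_subset_closedBall hz)) (ne_of_mem_sphere hz hr0.ne'))
      (fun z hz => hM z (hball z hz)), hQA]
  subst hPQ
  obtain ⟨C, hC, hdecay⟩ := exists_norm_pow_mul_one_sub_le hQ hAQ hQA hM
    (by positivity : 0 < 1 + r) (by linarith)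
  exact ⟨⟨C, hC, (1 + r)⁻¹, ⟨by positivity, inv_lt_one_of_one_lt₀ (by linarith)⟩, hdecay⟩,
    fun z hz hz1 => hasSum_smul_pow_mul_one_sub hQ hAQ hQA hM hz hz1 (hinv z hz hz1)⟩

/-- with `P := N_{-1} A₁`, under the unit-root assumption and the I(1)
condition `B = ran (I - A₁) ⊕ ker (I - A₁)` (internal direct sum of closed subspaces),
the coefficients `A₁^j (I - P)` decay geometrically and, for every `z` with
`|z| < 1 + η`, `z ≠ 1`, the series `∑_j z^j A₁^j (I - P)` converges in operator norm
with sum `(I - zA₁)⁻¹ + (z-1)⁻¹ P`, i.e.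
`(I - zA₁)⁻¹ = -(z-1)⁻¹ P + ∑_{j=0}^∞ A₁^j (I - P) z^j`. -/
theorem statement10
    {B : Type*} [NormedAddCommGroup B] [NormedSpace ℂ B] [CompleteSpace B]
    (A₁ : B →L[ℂ] B) (η : ℝ) (hη : 0 < η)
    (hinv : ∀ z : ℂ, ‖z‖ < 1 + η → z ≠ 1 → IsUnit (1 - z • A₁))
    (hnot : ¬ IsUnit (1 - A₁))
    (r : ℝ) (hr0 : 0 < r) (hrη : r < η)
    (P : B →L[ℂ] B) (hP : P = laurentN A₁ r (-1) * A₁)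
    (hcompl : IsCompl (LinearMap.range (((1 - A₁ : B →L[ℂ] B) : B →ₗ[ℂ] B))) (LinearMap.ker (((1 - A₁ : B →L[ℂ] B) : B →ₗ[ℂ] B))))
    (hclosed : IsClosed ((LinearMap.range (((1 - A₁ : B →L[ℂ] B) : B →ₗ[ℂ] B)) : Submodule ℂ B) : Set B)) :
    (∃ C : ℝ, 0 ≤ C ∧ ∃ a : ℝ, a ∈ Set.Ioo (0 : ℝ) 1 ∧
      ∀ j : ℕ, ‖A₁ ^ j * (1 - P)‖ ≤ C * a ^ j) ∧
    (∀ z : ℂ, ‖z‖ < 1 + η → z ≠ 1 →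
      HasSum (fun j : ℕ => z ^ j • (A₁ ^ j * (1 - P)))
        (Ring.inverse (1 - z • A₁) + (z - 1)⁻¹ • P)) :=
  statement10_general A₁ η hinv r hr0 hrη P hP hcompl hclosed
end

section
/- Assume B^p = ran(I_p − 𝒜₁) ⊕ ker(I_p − 𝒜₁) as an internal direct sum of closed subspaces, and let 𝒫 be the bounded projection onto ker(I_p − 𝒜₁) along ran(I_p − 𝒜₁). Let (x_t)_{t ≥ −p+1} and (e_t)_{t ≥ 1} be sequences in B satisfying the AR(p) law of motion x_t = A₁x_{t−1} + ⋯ + A_p x_{t−p} + e_t for all t ≥ 1, and set x̃_t := (x_t, x_{t−1}, …, x_{t−p+1}) ∈ B^p and ẽ_t := ι(e_t) = (e_t, 0, …, 0). Then for every t ≥ 0: x̃_t = 𝒫x̃₀ + ∑_{s=1}^t 𝒫ẽ_s + 𝒜₁^t(I_p − 𝒫)x̃₀ + ∑_{j=0}^{t−1} 𝒜₁^j(I_p − 𝒫)ẽ_{t−j}. In particular, x_t = π(𝒫x̃₀) + ∑_{s=1}^t (π∘𝒫∘ι)(e_s) + π(𝒜₁^t(I_p − 𝒫)x̃₀) + ∑_{j=0}^{t−1}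 (π∘𝒜₁^j(I_p − 𝒫)∘ι)(e_{t−j}). -/
/-- The companion operator `𝒜₁(x₁, …, x_p) = (A₁x₁ + ⋯ + A_p x_p, x₁, …, x_{p−1})`
on the product space `B^p` (here `p = p' + 1 ≥ 1`, indexed by `Fin (p' + 1)`). -/
noncomputable def companion {B : Type*} [NormedAddCommGroup B] [NormedSpace ℂ B]
    {p : ℕ} (A : Fin (p + 1) → (B →L[ℂ] B)) :
    (Fin (p + 1) → B) →L[ℂ] (Fin (p + 1) → B) :=
  ContinuousLinearMap.pi fun i =>
    Fin.cases (motive := fun _ => (Fin (p + 1) → B) →L[ℂ] B)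
      (∑ j, (A j).comp (ContinuousLinearMap.proj j))
      (fun k => ContinuousLinearMap.proj (Fin.castSucc k)) i

/-- The embedding `ι : B → B^p`, `ι(x) = (x, 0, …, 0)`. -/
noncomputable def iotaMap {B : Type*} [NormedAddCommGroup B] [NormedSpace ℂ B]
    {p : ℕ} : B →L[ℂ] (Fin (p + 1) → B) :=
  ContinuousLinearMap.pi fun i => if i = 0 then ContinuousLinearMap.id ℂ B else 0

/-!
In state-space form the AR(p) law reads `x̃_t = 𝒜₁ x̃_{t-1} + ẽ_t`, so by variation of constants
`x̃_t = 𝒜₁^t x̃₀ + ∑_{j<t} 𝒜₁^j ẽ_{t-j}`. The range of `𝒫` consists of fixed points of `𝒜₁`, hence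
`𝒜₁^j 𝒫 = 𝒫` and every power splits as `𝒜₁^j = 𝒫 + 𝒜₁^j (I_p - 𝒫)`; summing the `𝒫`-parts gives
the random-walk terms of the formula.
-/

theorem pow_mul_eq_of_mul_eq {S : Type*} [Monoid S] {T P : S} (h : T * P = P) (j : ℕ) :
    T ^ j * P = P := by
  induction j with
  | zero => rw [pow_zero, one_mul]
  | succ j ih => rw [pow_succ, mul_assoc, h, ih]

theorem pow_eq_add_pow_mul_one_sub {S : Type*} [Ring S] {T P : S} (h : T * P = P) (j : ℕ) :
    T ^ j = P + T ^ j * (1 - P) := by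
  rw [mul_sub, mul_one, pow_mul_eq_of_mul_eq h, add_sub_cancel]

namespace Module.End

variable {R M : Type*} [Ring R] [AddCommGroup M] [Module R M]

theorem mul_eq_right_of_range_le_ker_one_sub {T P : Module.End R M}
    (h : LinearMap.range P ≤ LinearMap.ker (1 - T)) : T * P = P := by
  ext v
  have hv : (1 - T) (P v) = 0 := h ⟨v, rfl⟩
  rw [LinearMap.sub_apply, one_apply, sub_eq_zero] at hv
  exact hv.symm

theorem eq_pow_apply_add_sum_of_recursion (T : Module.End R M) {y f : ℕ → M}
    (hy : ∀ t, y (t + 1) = T (y t) + f (t + 1)) (t : ℕ) :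
    y t = (T ^ t) (y 0) + ∑ j ∈ Finset.range t, (T ^ j) (f (t - j)) := by
  induction t with
  | zero => simp
  | succ t ih =>
    rw [hy, ih, map_add, map_sum, Finset.sum_range_succ']
    simp only [pow_succ', mul_apply, Nat.add_sub_add_right, pow_zero, one_apply, Nat.sub_zero]
    abel

theorem eq_add_sum_add_pow_apply_add_sum_of_recursion {T P : Module.End R M} (hTP : T * P = P)
    {y f : ℕ → M} (hy : ∀ t, y (t + 1) = T (y t) + f (t + 1)) (t : ℕ) :
    y t = P (y 0) + ∑ s ∈ Finset.Icc 1 t, P (f s) + (T ^ t * (1 - P)) (y 0)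
      + ∑ j ∈ Finset.range t, (T ^ j * (1 - P)) (f (t - j)) := by
  have hreflect : ∑ j ∈ Finset.range t, P (f (t - j)) = ∑ s ∈ Finset.Icc 1 t, P (f s) := by
    rw [← Finset.Ico_add_one_right_eq_Icc, ← Nat.Ico_zero_eq_range,
      Finset.sum_Ico_reflect (fun s => P (f s)) 0 t.le_succ, Nat.add_sub_cancel_left,
      Nat.sub_zero]
  have hsplit (j : ℕ) (v : M) : (T ^ j) v = P v + (T ^ j * (1 - P)) v := by
    rw [← LinearMap.add_apply, ← pow_eq_add_pow_mul_one_sub hTP]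
  rw [eq_pow_apply_add_sum_of_recursion T hy t, ← hreflect]
  simp only [hsplit, Finset.sum_add_distrib]
  abel

end Module.End

section Companion

variable {B : Type*} [NormedAddCommGroup B] [NormedSpace ℂ B] {p : ℕ}

@[simp]
theorem companion_apply_zero (A : Fin (p + 1) → (B →L[ℂ] B)) (v : Fin (p + 1) → B) :
    companion A v 0 = ∑ j, A j (v j) := by
  simp [companion]

@[simp]
theorem companion_apply_succ (A : Fin (p + 1) → (B →L[ℂ] B)) (v : Fin (p + 1) → B) (k : Fin p) :
    companion A v k.succ = v k.castSucc := by
  simp [companion]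

@[simp]
theorem iotaMap_apply_zero (b : B) : iotaMap (p := p) b 0 = b := by
  simp [iotaMap]

@[simp]
theorem iotaMap_apply_succ (b : B) (k : Fin p) : iotaMap (p := p) b k.succ = 0 := by
  simp [iotaMap]

theorem lags_eq_companion_add_iotaMap (A : Fin (p + 1) → (B →L[ℂ] B)) {x : ℤ → B} {t : ℤ}
    {b : B} (hlaw : x t = ∑ j : Fin (p + 1), A j (x (t - ((j : ℕ) + 1 : ℤ))) + b) :
    (fun i : Fin (p + 1) => x (t - (i : ℕ)))
      = companion A (fun i : Fin (p + 1) => x (t - 1 - (i : ℕ))) + iotaMap b := by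
  funext i
  cases i using Fin.cases with
  | zero => simp [hlaw, sub_sub, add_comm]
  | succ k => simp [sub_sub, add_comm]

end Companion

theorem statement11_general
    {B : Type*} [NormedAddCommGroup B] [NormedSpace ℂ B]
    {p : ℕ} (A : Fin (p + 1) → (B →L[ℂ] B))
    (Pc : (Fin (p + 1) → B) →L[ℂ] (Fin (p + 1) → B))
    (hPcrange : LinearMap.range (Pc : (Fin (p + 1) → B) →ₗ[ℂ] (Fin (p + 1) → B)) = LinearMap.ker ((1 - companion A : (Fin (p + 1) → B) →L[ℂ] (Fin (p + 1) → B)) : (Fin (p + 1) → B) →ₗ[ℂ] (Fin (p + 1) → B)))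
    (x e : ℤ → B)
    (hlaw : ∀ t : ℤ, 1 ≤ t →
      x t = (∑ j : Fin (p + 1), A j (x (t - ((j : ℕ) + 1 : ℤ)))) + e t)
    (xt et : ℤ → (Fin (p + 1) → B))
    (hxt : ∀ t : ℤ, xt t = fun i : Fin (p + 1) => x (t - (i : ℕ)))
    (het : ∀ t : ℤ, et t = iotaMap (e t)) :
    ∀ t : ℕ,
      (xt t = Pc (xt 0) + (∑ s ∈ Finset.Icc 1 t, Pc (et s))
        + ((companion A) ^ t * (1 - Pc)) (xt 0)
        + ∑ j ∈ Finset.range t, ((companion A) ^ j * (1 - Pc)) (et ((t : ℤ) - j))) ∧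
      (x t = Pc (xt 0) 0 + (∑ s ∈ Finset.Icc 1 t, Pc (et s) 0)
        + ((companion A) ^ t * (1 - Pc)) (xt 0) 0
        + ∑ j ∈ Finset.range t, ((companion A) ^ j * (1 - Pc)) (et ((t : ℤ) - j)) 0) := by
  let toEnd := ContinuousLinearMap.toLinearMapRingHom (R₁ := ℂ) (M₁ := Fin (p + 1) → B)
  have hfix : toEnd (companion A) * toEnd Pc = toEnd Pc :=
    Module.End.mul_eq_right_of_range_le_ker_one_sub (by simpa [toEnd] using hPcrange.le)
  have hstep (n : ℕ) : xt (n + 1 : ℕ) = toEnd (companion A) (xt n) + et (n + 1 : ℕ) := by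
    rw [hxt, hxt, het, lags_eq_companion_add_iotaMap A (hlaw _ (by omega))]
    push_cast
    simp [toEnd]
  intro t
  have hstate := Module.End.eq_add_sum_add_pow_apply_add_sum_of_recursion hfix
    (y := fun n : ℕ => xt n) (f := fun n : ℕ => et n) hstep t
  simp only [← map_pow, ← map_one toEnd, ← map_sub, ← map_mul] at hstate
  simp only [toEnd, ContinuousLinearMap.toLinearMapRingHom_apply, ContinuousLinearMap.coe_coe,
    Nat.cast_zero] at hstate
  have hvec : xt t = Pc (xt 0) + ∑ s ∈ Finset.Icc 1 t, Pc (et s)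
      + ((companion A) ^ t * (1 - Pc)) (xt 0)
      + ∑ j ∈ Finset.range t, ((companion A) ^ j * (1 - Pc)) (et ((t : ℤ) - j)) := by
    refine hstate.trans (congrArg _ (Finset.sum_congr rfl fun j hj => ?_))
    rw [Nat.cast_sub (Finset.mem_range.1 hj).le]
  refine ⟨hvec, ?_⟩
  have hfirst := congrFun hvec 0
  rw [hxt] at hfirst
  simpa only [Pi.add_apply, Finset.sum_apply, Fin.val_zero, Nat.cast_zero, sub_zero] using hfirst

/-- if `B^p = ran(I_p − 𝒜₁) ⊕ ker(I_p − 𝒜₁)` (internal direct sum of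
closed subspaces) and `Pc` is the bounded projection onto `ker(I_p − 𝒜₁)` along
`ran(I_p − 𝒜₁)`, then any solution of the AR(p) law of motion
`x_t = A₁x_{t−1} + ⋯ + A_p x_{t−p} + e_t` (`t ≥ 1`) satisfies, with
`x̃_t = (x_t, …, x_{t−p+1})` and `ẽ_t = ι(e_t)`, for every `t ≥ 0`:
`x̃_t = Pcx̃₀ + ∑_{s=1}^t Pcẽ_s + 𝒜₁^t(I_p − Pc)x̃₀ + ∑_{j=0}^{t−1} 𝒜₁^j(I_p − Pc)ẽ_{t−j}`,
and in particular the corresponding identity for `x_t` after applying `π`. -/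
theorem statement11
    {B : Type*} [NormedAddCommGroup B] [NormedSpace ℂ B] [CompleteSpace B]
    {p : ℕ} (A : Fin (p + 1) → (B →L[ℂ] B))
    (hcompl : IsCompl (LinearMap.range ((1 - companion A : (Fin (p + 1) → B) →L[ℂ] (Fin (p + 1) → B)) : (Fin (p + 1) → B) →ₗ[ℂ] (Fin (p + 1) → B)))
      (LinearMap.ker ((1 - companion A : (Fin (p + 1) → B) →L[ℂ] (Fin (p + 1) → B)) : (Fin (p + 1) → B) →ₗ[ℂ] (Fin (p + 1) → B))))
    (hclosed : IsClosed
      ((LinearMap.range ((1 - companion A : (Fin (p + 1) → B) →L[ℂ] (Fin (p + 1) → B)) : (Fin (p + 1) → B) →ₗ[ℂ] (Fin (p + 1) → B)) : Submodule ℂ (Fin (p + 1) → B)) :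
        Set (Fin (p + 1) → B)))
    (Pc : (Fin (p + 1) → B) →L[ℂ] (Fin (p + 1) → B))
    (hPcidem : Pc * Pc = Pc)
    (hPcrange : LinearMap.range (Pc : (Fin (p + 1) → B) →ₗ[ℂ] (Fin (p + 1) → B)) = LinearMap.ker ((1 - companion A : (Fin (p + 1) → B) →L[ℂ] (Fin (p + 1) → B)) : (Fin (p + 1) → B) →ₗ[ℂ] (Fin (p + 1) → B)))
    (hPcker : LinearMap.ker (Pc : (Fin (p + 1) → B) →ₗ[ℂ] (Fin (p + 1) → B)) = LinearMap.range ((1 - companion A : (Fin (p + 1) → B) →L[ℂ] (Fin (p + 1) → B)) : (Fin (p + 1) → B) →ₗ[ℂ] (Fin (p + 1) → B)))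
    (x e : ℤ → B)
    (hlaw : ∀ t : ℤ, 1 ≤ t →
      x t = (∑ j : Fin (p + 1), A j (x (t - ((j : ℕ) + 1 : ℤ)))) + e t)
    (xt et : ℤ → (Fin (p + 1) → B))
    (hxt : ∀ t : ℤ, xt t = fun i : Fin (p + 1) => x (t - (i : ℕ)))
    (het : ∀ t : ℤ, et t = iotaMap (e t)) :
    ∀ t : ℕ,
      (xt t = Pc (xt 0) + (∑ s ∈ Finset.Icc 1 t, Pc (et s))
        + ((companion A) ^ t * (1 - Pc)) (xt 0)
        + ∑ j ∈ Finset.range t, ((companion A) ^ j * (1 - Pc)) (et ((t : ℤ) - j))) ∧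
      (x t = Pc (xt 0) 0 + (∑ s ∈ Finset.Icc 1 t, Pc (et s) 0)
        + ((companion A) ^ t * (1 - Pc)) (xt 0) 0
        + ∑ j ∈ Finset.range t, ((companion A) ^ j * (1 - Pc)) (et ((t : ℤ) - j)) 0) :=
  statement11_general A Pc hPcrange x e hlaw xt et hxt het
end

section
/- Assume the covariance operator C_ε is positive definite and A ≠ 0. For every f ∈ B′ the following are equivalent: (i) there exists a B-valued random variable X₀ with E‖X₀‖² < ∞ such that sup_{t ≥ 0} E[(f(X_t))²] < ∞, where X_t := (X₀ − ν₀) + A(∑_{s=1}^t ε_s) + ν_t; (ii) f ∘ A = 0. In particular, for every t ≥ 1 and every f ∈ B′, E[(f(A ∑_{s=1}^t ε_s))²] = t · (f∘A)(C_ε(f∘A)). -/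
/-!
For `g = f ∘ A`, `f (A ∑_{s ≤ t} ε_s) = ∑_{s ≤ t} g (ε_s)` is a sum of i.i.d. centred scalars whose
cross terms vanish by independence, so its second moment is `t · E[g(ε₀)²] = t · g (C_ε g)`.
If `f (X_t)` has bounded second moments, then so does this sum, because the two other summands
of `X_t` are square integrable uniformly in `t`; hence `g (ε₀) = 0` almost surely, so
`g (C_ε g) = 0` and `g = 0` by positive definiteness. Conversely, if `g = 0` then `X₀ = ν₀`
gives `f (X_t) = f (ν_t)`, whose second moment does not depend on `t`.
-/

open MeasureTheory ProbabilityTheory Finset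

theorem eq_zero_of_forall_nat_mul_le {c K : ℝ} (hc : 0 ≤ c) (h : ∀ n : ℕ, n * c ≤ K) :
    c = 0 := by
  by_contra hne
  obtain ⟨n, hn⟩ := exists_nat_gt (K / c)
  have := (div_lt_iff₀ (hc.lt_of_ne' hne)).mp hn
  linarith [h n]

theorem ContinuousLinearMap.apply_integral_smul_self {Ω E 𝕜 : Type*} [MeasurableSpace Ω]
    {P : Measure Ω} [RCLike 𝕜] [NormedAddCommGroup E] [NormedSpace 𝕜 E] [NormedSpace ℝ E]
    [CompleteSpace E] (g : E →L[𝕜] 𝕜) {X : Ω → E} (hX : MemLp X 2 P) :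
    g (∫ ω, g (X ω) • X ω ∂P) = ∫ ω, g (X ω) ^ 2 ∂P := by
  have hint : Integrable (fun ω => g (X ω) • X ω) P :=
    memLp_one_iff_integrable.mp (hX.smul (g.comp_memLp' hX))
  rw [← g.integral_comp_comm hint]
  simp only [map_smul, smul_eq_mul, sq]

theorem integral_norm_sq_le_three_mul {Ω E : Type*} [MeasurableSpace Ω] {P : Measure Ω}
    [NormedAddCommGroup E] {F G H : Ω → E} (hF : MemLp F 2 P) (hG : MemLp G 2 P)
    (hH : MemLp H 2 P) :
    ∫ ω, ‖G ω‖ ^ 2 ∂P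
      ≤ 3 * (∫ ω, ‖F ω + G ω + H ω‖ ^ 2 ∂P + ∫ ω, ‖F ω‖ ^ 2 ∂P + ∫ ω, ‖H ω‖ ^ 2 ∂P) := by
  have hsq : ∀ {K : Ω → E}, MemLp K 2 P → Integrable (fun ω => ‖K ω‖ ^ 2) P :=
    fun hK => (memLp_two_iff_integrable_sq_norm hK.1).mp hK
  have hpt : ∀ ω, ‖G ω‖ ^ 2 ≤ 3 * (‖F ω + G ω + H ω‖ ^ 2 + ‖F ω‖ ^ 2 + ‖H ω‖ ^ 2) := by
    intro ω
    have htri : ‖G ω‖ ≤ ‖F ω + G ω + H ω‖ + ‖F ω‖ + ‖H ω‖ := by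
      calc ‖G ω‖ = ‖F ω + G ω + H ω - F ω - H ω‖ := by abel_nf
        _ ≤ ‖F ω + G ω + H ω‖ + ‖F ω‖ + ‖H ω‖ :=
          (norm_sub_le _ _).trans (add_le_add_left (norm_sub_le _ _) _)
    nlinarith [norm_nonneg (G ω), sq_nonneg (‖F ω + G ω + H ω‖ - ‖F ω‖),
      sq_nonneg (‖F ω + G ω + H ω‖ - ‖H ω‖), sq_nonneg (‖F ω‖ - ‖H ω‖)]
  have hFGH : MemLp (fun ω => F ω + G ω + H ω) 2 P := (hF.add hG).add hH
  calc ∫ ω, ‖G ω‖ ^ 2 ∂P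
      ≤ ∫ ω, 3 * (‖F ω + G ω + H ω‖ ^ 2 + ‖F ω‖ ^ 2 + ‖H ω‖ ^ 2) ∂P :=
        integral_mono (hsq hG) ((((hsq hFGH).add (hsq hF)).add (hsq hH)).const_mul 3) hpt
    _ = _ := by
        rw [integral_const_mul, integral_add _ (hsq hH), integral_add (hsq hFGH) (hsq hF)]
        exact (hsq hFGH).add (hsq hF)

section IIDSums

variable {Ω ι E 𝕜 : Type*} [MeasurableSpace Ω] {P : Measure Ω}
  [MeasurableSpace E] [RCLike 𝕜] {ε : ι → Ω → E} {X : Ω → E} {φ ψ : E → 𝕜}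

theorem integral_sum_mul_sum_of_iIndepFun [DecidableEq ι] (hindep : iIndepFun ε P)
    (hident : ∀ i, IdentDistrib (ε i) X P P) (hφ : Measurable φ) (hψ : Measurable ψ)
    (hφ₂ : MemLp (fun ω => φ (X ω)) 2 P) (hψ₂ : MemLp (fun ω => ψ (X ω)) 2 P)
    (hφ₀ : ∫ ω, φ (X ω) ∂P = 0) (s : Finset ι) :
    ∫ ω, (∑ i ∈ s, φ (ε i ω)) * (∑ i ∈ s, ψ (ε i ω)) ∂P
      = #s * ∫ ω, φ (X ω) * ψ (X ω) ∂P := by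
  have hφi : ∀ i, IdentDistrib (fun ω => φ (ε i ω)) (fun ω => φ (X ω)) P P :=
    fun i => (hident i).comp hφ
  have hψi : ∀ i, IdentDistrib (fun ω => ψ (ε i ω)) (fun ω => ψ (X ω)) P P :=
    fun i => (hident i).comp hψ
  have hint : ∀ i j, Integrable (fun ω => φ (ε i ω) * ψ (ε j ω)) P := fun i j =>
    ((hφi i).memLp_iff.mpr hφ₂).integrable_mul ((hψi j).memLp_iff.mpr hψ₂)
  have hdiag : ∀ i, ∫ ω, φ (ε i ω) * ψ (ε i ω) ∂P = ∫ ω, φ (X ω) * ψ (X ω) ∂P :=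
    fun i => ((hident i).comp (hφ.mul hψ)).integral_eq
  have hcross : ∀ i j, i ≠ j → ∫ ω, φ (ε i ω) * ψ (ε j ω) ∂P = 0 := fun i j hij => by
    rw [(hindep.indepFun hij).integral_fun_comp_mul_comp (hident i).aemeasurable_fst
      (hident j).aemeasurable_fst hφ.aestronglyMeasurable hψ.aestronglyMeasurable,
      (hφi i).integral_eq, hφ₀, zero_mul]
  simp only [sum_mul_sum]
  rw [integral_finsetSum _ fun i _ => integrable_finsetSum _ fun j _ => hint i j]
  calc ∑ i ∈ s, ∫ ω, ∑ j ∈ s, φ (ε i ω) * ψ (ε j ω) ∂P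
      = ∑ i ∈ s, ∫ ω, φ (ε i ω) * ψ (ε i ω) ∂P := by
        refine sum_congr rfl fun i hi => ?_
        rw [integral_finsetSum _ fun j _ => hint i j]
        exact sum_eq_single_of_mem i hi fun j _ hji => hcross i j hji.symm
    _ = #s * ∫ ω, φ (X ω) * ψ (X ω) ∂P := by
        rw [sum_congr rfl fun i _ => hdiag i, sum_const, nsmul_eq_mul]

theorem integral_norm_sq_sum_of_iIndepFun [DecidableEq ι] (hindep : iIndepFun ε P)
    (hident : ∀ i, IdentDistrib (ε i) X P P) (hφ : Measurable φ)
    (hφ₂ : MemLp (fun ω => φ (X ω)) 2 P) (hφ₀ : ∫ ω, φ (X ω) ∂P = 0) (s : Finset ι) :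
    ∫ ω, ‖∑ i ∈ s, φ (ε i ω)‖ ^ 2 ∂P = #s * ∫ ω, ‖φ (X ω)‖ ^ 2 ∂P := by
  have hconj : MemLp (fun ω => (starRingEnd 𝕜) (φ (X ω))) 2 P :=
    (RCLike.conjCLE (K := 𝕜)).toContinuousLinearMap.comp_memLp' hφ₂
  have h := integral_sum_mul_sum_of_iIndepFun hindep hident hφ
    (RCLike.continuous_conj.measurable.comp hφ) hφ₂ hconj hφ₀ s
  simp only [Function.comp_apply, ← map_sum, RCLike.mul_conj, ← RCLike.ofReal_pow,
    integral_ofReal] at h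
  exact_mod_cast h

theorem ae_eq_zero_of_forall_integral_norm_sq_sum_le [DecidableEq ι]
    (hindep : iIndepFun ε P) (hident : ∀ i, IdentDistrib (ε i) X P P) (hφ : Measurable φ)
    (hφ₂ : MemLp (fun ω => φ (X ω)) 2 P) (hφ₀ : ∫ ω, φ (X ω) ∂P = 0) {s : ℕ → Finset ι}
    (hs : ∀ n, #(s n) = n) {K : ℝ} (hK : ∀ n, ∫ ω, ‖∑ i ∈ s n, φ (ε i ω)‖ ^ 2 ∂P ≤ K) :
    ∀ᵐ ω ∂P, φ (X ω) = 0 := by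
  have hvar : ∫ ω, ‖φ (X ω)‖ ^ 2 ∂P = 0 := eq_zero_of_forall_nat_mul_le
    (integral_nonneg fun _ => by positivity) fun n => by
      simpa [integral_norm_sq_sum_of_iIndepFun hindep hident hφ hφ₂ hφ₀, hs] using hK n
  filter_upwards [(integral_eq_zero_iff_of_nonneg (fun _ => by positivity)
    ((memLp_two_iff_integrable_sq_norm hφ₂.1).mp hφ₂)).mp hvar] with ω hω
  simpa using hω

end IIDSums

theorem statement12_general
    {B : Type*} [NormedAddCommGroup B] [NormedSpace ℂ B] [CompleteSpace B]
    [MeasurableSpace B] [BorelSpace B]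
    {Ω : Type*} [MeasurableSpace Ω] (P : Measure Ω) [IsProbabilityMeasure P]
    (ε : ℤ → Ω → B)
    (hindep : ProbabilityTheory.iIndepFun ε P)
    (hident : ∀ t, ProbabilityTheory.IdentDistrib (ε t) (ε 0) P P)
    (hL2 : MemLp (ε 0) 2 P)
    (hmean : ∫ ω, ε 0 ω ∂P = 0)
    (A : B →L[ℂ] B)
    (ν : ℕ → Ω → B)
    (hνident : ∀ t, ProbabilityTheory.IdentDistrib (ν t) (ν 0) P P)
    (hνL2 : MemLp (ν 0) 2 P)
    (Cep : (B →L[ℂ] ℂ) → B)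
    (hCep : ∀ g : B →L[ℂ] ℂ, Cep g = ∫ ω, g (ε 0 ω) • ε 0 ω ∂P)
    (hposdef : ∀ g : B →L[ℂ] ℂ, g (Cep g) = 0 → g = 0)
    (f : B →L[ℂ] ℂ) :
    ((∃ X₀ : Ω → B, MemLp X₀ 2 P ∧ ∃ M : ℝ, ∀ t : ℕ,
        ∫ ω, ‖f ((X₀ ω - ν 0 ω) + A (∑ s ∈ Finset.Icc 1 t, ε (s : ℤ) ω) + ν t ω)‖ ^ 2 ∂P
          ≤ M) ↔
      f.comp A = 0) ∧
    (∀ t : ℕ, 1 ≤ t →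
      ∫ ω, (f (A (∑ s ∈ Finset.Icc 1 t, ε (s : ℤ) ω))) ^ 2 ∂P
        = (t : ℂ) * (f.comp A) (Cep (f.comp A))) := by
  set g := f.comp A
  have hindepℕ : iIndepFun (fun n : ℕ => ε n) P := hindep.precomp Nat.cast_injective
  have hidentℕ : ∀ n : ℕ, IdentDistrib (ε n) (ε 0) P P := fun n => hident n
  have hgε : MemLp (fun ω => g (ε 0 ω)) 2 P := g.comp_memLp' hL2
  have hgε₀ : ∫ ω, g (ε 0 ω) ∂P = 0 := by
    rw [g.integral_comp_comm (hL2.integrable one_le_two), hmean, map_zero]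
  have hcov : g (Cep g) = ∫ ω, g (ε 0 ω) ^ 2 ∂P := by rw [hCep, g.apply_integral_smul_self hL2]
  have hsum : ∀ (t : ℕ) ω, f (A (∑ s ∈ Icc 1 t, ε s ω)) = ∑ s ∈ Icc 1 t, g (ε s ω) :=
    fun _ _ => map_sum g _ _
  have hfν : ∀ t, ∫ ω, ‖f (ν t ω)‖ ^ 2 ∂P = ∫ ω, ‖f (ν 0 ω)‖ ^ 2 ∂P := fun t =>
    ((hνident t).comp (f.continuous.norm.pow 2).measurable).integral_eq
  refine ⟨⟨?_, fun hg => ⟨ν 0, hνL2, ∫ ω, ‖f (ν 0 ω)‖ ^ 2 ∂P, fun t => ?_⟩⟩, fun t _ => ?_⟩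
  · rintro ⟨X₀, hX₀, M, hM⟩
    have hbdd : ∀ t : ℕ, ∫ ω, ‖∑ s ∈ Icc 1 t, g (ε s ω)‖ ^ 2 ∂P
        ≤ 3 * (M + ∫ ω, ‖f (X₀ ω - ν 0 ω)‖ ^ 2 ∂P + ∫ ω, ‖f (ν 0 ω)‖ ^ 2 ∂P) := fun t => by
      have h3 := integral_norm_sq_le_three_mul (F := fun ω => f (X₀ ω - ν 0 ω))
        (G := fun ω => ∑ s ∈ Icc 1 t, g (ε s ω)) (H := fun ω => f (ν t ω))
        (f.comp_memLp' (hX₀.sub hνL2))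
        (memLp_finsetSum (Icc 1 t) fun s _ => g.comp_memLp' ((hidentℕ s).memLp_iff.mpr hL2))
        (f.comp_memLp' ((hνident t).memLp_iff.mpr hνL2))
      simp only [← hsum, ← map_add, hfν] at h3 ⊢
      linarith [hM t]
    have hae := ae_eq_zero_of_forall_integral_norm_sq_sum_le hindepℕ hidentℕ
      g.continuous.measurable hgε hgε₀ (fun t => by simp) hbdd
    exact hposdef g (hcov.trans (integral_eq_zero_of_ae (hae.mono fun ω hω => by simp [hω])))
  · simp only [sub_self, zero_add, map_add, hsum, hg, zero_apply, sum_const_zero]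
    exact (hfν t).le
  · have h := integral_sum_mul_sum_of_iIndepFun hindepℕ hidentℕ g.continuous.measurable
      g.continuous.measurable hgε hgε hgε₀ (Icc 1 t)
    simp only [hsum, sq, hcov, h, Nat.card_Icc, add_tsub_cancel_right]

/-- let `(ε_t)` be an i.i.d. mean-zero square-integrable sequence in a
separable complex Banach space `B` with positive definite covariance operator `Cep`,
`A ≠ 0` a bounded operator, and `(ν_t)` identically distributed square-integrable.
For `f ∈ B′`, boundedness of the second moments of `f(X_t)` along
`X_t = (X₀ − ν₀) + A ∑_{s=1}^t ε_s + ν_t` (for some square-integrable `X₀`) is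
equivalent to `f ∘ A = 0`; in particular
`E[(f(A ∑_{s=1}^t ε_s))²] = t · (f∘A)(Cep(f∘A))` for every `t ≥ 1`. -/
theorem statement12
    {B : Type*} [NormedAddCommGroup B] [NormedSpace ℂ B] [CompleteSpace B]
    [TopologicalSpace.SeparableSpace B] [MeasurableSpace B] [BorelSpace B]
    {Ω : Type*} [MeasurableSpace Ω] (P : Measure Ω) [IsProbabilityMeasure P]
    (ε : ℤ → Ω → B) (hεmeas : ∀ t, Measurable (ε t))
    (hindep : ProbabilityTheory.iIndepFun ε P)
    (hident : ∀ t, ProbabilityTheory.IdentDistrib (ε t) (ε 0) P P)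
    (hL2 : MemLp (ε 0) 2 P)
    (hmean : ∫ ω, ε 0 ω ∂P = 0)
    (A : B →L[ℂ] B) (hA : A ≠ 0)
    (ν : ℕ → Ω → B) (hνmeas : ∀ t, Measurable (ν t))
    (hνident : ∀ t, ProbabilityTheory.IdentDistrib (ν t) (ν 0) P P)
    (hνL2 : MemLp (ν 0) 2 P)
    (Cep : (B →L[ℂ] ℂ) → B)
    (hCep : ∀ g : B →L[ℂ] ℂ, Cep g = ∫ ω, g (ε 0 ω) • ε 0 ω ∂P)
    (hposdef : ∀ g : B →L[ℂ] ℂ, g (Cep g) = 0 → g = 0)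
    (f : B →L[ℂ] ℂ) :
    ((∃ X₀ : Ω → B, MemLp X₀ 2 P ∧ ∃ M : ℝ, ∀ t : ℕ,
        ∫ ω, ‖f ((X₀ ω - ν 0 ω) + A (∑ s ∈ Finset.Icc 1 t, ε (s : ℤ) ω) + ν t ω)‖ ^ 2 ∂P
          ≤ M) ↔
      f.comp A = 0) ∧
    (∀ t : ℕ, 1 ≤ t →
      ∫ ω, (f (A (∑ s ∈ Finset.Icc 1 t, ε (s : ℤ) ω))) ^ 2 ∂P
        = (t : ℂ) * (f.comp A) (Cep (f.comp A))) :=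
  statement12_general P ε hindep hident hL2 hmean A ν hνident hνL2 Cep hCep hposdef f
end
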